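/- arXiv:cond-mat/9603116 — 4 statements merged into one kernel-verified Lean document; each statement's English description precedes it below -/
import Mathlib

section
/- Let 0<s<1 and let u, v, β be complex numbers (with v≠β, u≠β, u≠0, v≠0). Then |v-β|^{-s} + |u-β|^{-s} ≤ (|v|^s/|v-β|^s)(|u|^{-s}+|u-β|^{-s}) + (|u|^s/|u-β|^s)(|v|^{-s}+|v-β|^{-s}). -/
lemma my_rpow_subadd (x y s : ℝ) (hx : 0 ≤ x) (hy : 0 ≤ y) (hs : 0 ≤ s) (hs1 : s ≤ 1) :
    (x + y) ^ s ≤ x ^ s + y ^ s := by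
  have h := NNReal.rpow_add_le_add_rpow (⟨x, hx⟩ : NNReal) (⟨y, hy⟩ : NNReal) hs hs1
  exact_mod_cast h

lemma my_aux (a b c d : ℝ) (hc : 0 < c) (hd : 0 < d) (ha : 0 ≤ a) (hb : 0 ≤ b)
    (h1 : a ≤ c + d + b) (h2 : b ≤ c + d + a) :
    a + b ≤ c + d + c / d * b + d / c * a := by
  rw [← sub_nonneg]
  have hcd : (0:ℝ) < c * d := mul_pos hc hd
  have expand : c + d + c / d * b + d / c * a - (a + b)
      = (c*d*(c+d) + b*c*(c-d) + a*d*(d-c)) / (c*d) := by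
    field_simp; ring
  rw [expand]
  apply div_nonneg _ hcd.le
  rcases le_total d c with h | h
  · nlinarith [mul_nonneg (mul_nonneg (sub_nonneg.mpr h) hd.le) (by linarith : (0:ℝ) ≤ c+d+b-a),
      mul_nonneg hb (sq_nonneg (c-d)), mul_nonneg (mul_nonneg hd.le hd.le) (by linarith : (0:ℝ) ≤ c+d)]
  · nlinarith [mul_nonneg (mul_nonneg (sub_nonneg.mpr h) hc.le) (by linarith : (0:ℝ) ≤ c+d+a-b),
      mul_nonneg ha (sq_nonneg (c-d)), mul_nonneg (mul_nonneg hc.le hc.le) (by linarith : (0:ℝ) ≤ c+d)]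

theorem stmt0 (s : ℝ) (hs0 : 0 < s) (hs1 : s < 1) (u v β : ℂ)
    (hu0 : u ≠ 0) (hv0 : v ≠ 0) (hu : u ≠ β) (hv : v ≠ β) :
    ‖v - β‖ ^ (-s) + ‖u - β‖ ^ (-s) ≤
      ‖v‖ ^ s / ‖v - β‖ ^ s *
        (‖u‖ ^ (-s) + ‖u - β‖ ^ (-s)) +
      ‖u‖ ^ s / ‖u - β‖ ^ s *
        (‖v‖ ^ (-s) + ‖v - β‖ ^ (-s)) := by
  have hA : 0 < ‖v‖ := norm_pos_iff.mpr hv0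
  have hB : 0 < ‖u‖ := norm_pos_iff.mpr hu0
  have hamem : 0 < ‖v - β‖ := norm_pos_iff.mpr (sub_ne_zero.mpr hv)
  have hbmem : 0 < ‖u - β‖ := norm_pos_iff.mpr (sub_ne_zero.mpr hu)
  set A := ‖v‖ with hAdef
  set B := ‖u‖ with hBdef
  set a := ‖v - β‖ with hadef
  set b := ‖u - β‖ with hbdef
  have hA' : 0 < A ^ s := Real.rpow_pos_of_pos hA s
  have hB' : 0 < B ^ s := Real.rpow_pos_of_pos hB s
  have ha' : 0 < a ^ s := Real.rpow_pos_of_pos hamem s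
  have hb' : 0 < b ^ s := Real.rpow_pos_of_pos hbmem s
  -- triangle inequalities
  have sub1 : ‖v - u‖ ≤ A + B := by
    simpa [sub_eq_add_neg] using norm_add_le v (-u)
  have sub2 : ‖u - v‖ ≤ B + A := by
    simpa [sub_eq_add_neg] using norm_add_le u (-v)
  have t1 : a ≤ A + (B + b) := by
    have e : v - β = v - u + (u - β) := by ring
    calc a = ‖v - u + (u - β)‖ := by rw [hadef, e]
      _ ≤ ‖v - u‖ + b := norm_add_le _ _
      _ ≤ (A + B) + b := by linarith
      _ = A + (B + b) := by ring
  have t2 : b ≤ B + (A + a) := by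
    have e : u - β = u - v + (v - β) := by ring
    calc b = ‖u - v + (v - β)‖ := by rw [hbdef, e]
      _ ≤ ‖u - v‖ + a := norm_add_le _ _
      _ ≤ (B + A) + a := by linarith
      _ = B + (A + a) := by ring
  -- rpow versions
  have r1 : a ^ s ≤ A ^ s + B ^ s + b ^ s := by
    calc a ^ s ≤ (A + (B + b)) ^ s :=
          Real.rpow_le_rpow hamem.le t1 hs0.le
      _ ≤ A ^ s + (B + b) ^ s :=
          my_rpow_subadd A (B + b) s hA.le (by positivity) hs0.le hs1.le
      _ ≤ A ^ s + (B ^ s + b ^ s) := by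
          have := my_rpow_subadd B b s hB.le hbmem.le hs0.le hs1.le
          linarith
      _ = A ^ s + B ^ s + b ^ s := by ring
  have r2 : b ^ s ≤ A ^ s + B ^ s + a ^ s := by
    calc b ^ s ≤ (B + (A + a)) ^ s :=
          Real.rpow_le_rpow hbmem.le t2 hs0.le
      _ ≤ B ^ s + (A + a) ^ s :=
          my_rpow_subadd B (A + a) s hB.le (by positivity) hs0.le hs1.le
      _ ≤ B ^ s + (A ^ s + a ^ s) := by
          have := my_rpow_subadd A a s hA.le hamem.le hs0.le hs1.le
          linarith
      _ = A ^ s + B ^ s + a ^ s := by ring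
  have key := my_aux (a ^ s) (b ^ s) (A ^ s) (B ^ s) hA' hB' ha'.le hb'.le r1 r2
  rw [Real.rpow_neg hamem.le, Real.rpow_neg hbmem.le, Real.rpow_neg hA.le,
    Real.rpow_neg hB.le]
  rw [← mul_le_mul_iff_of_pos_right (show (0:ℝ) < a ^ s * b ^ s by positivity)]
  have e1 : ((a ^ s)⁻¹ + (b ^ s)⁻¹) * (a ^ s * b ^ s) = a ^ s + b ^ s := by
    field_simp; ring
  have e2 : (A ^ s / a ^ s * ((B ^ s)⁻¹ + (b ^ s)⁻¹)
        + B ^ s / b ^ s * ((A ^ s)⁻¹ + (a ^ s)⁻¹)) * (a ^ s * b ^ s)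
      = A ^ s + B ^ s + A ^ s / B ^ s * (b ^ s) + B ^ s / A ^ s * (a ^ s) := by
    field_simp; ring
  rw [e1, e2]
  linarith
end

section
/- (Decoupling lemma) Let 0<s<τ≤1 and let q be a nonzero finite nonnegative τ-regular measure on ℝ with regularity constant M_τ(q). Then for all α, β ∈ ℂ: ∫ (|v-α|^s/|v-β|^s) dq(v) ≥ C_{s,τ} · (q(ℝ)/M_τ(q))^{s/τ} · ∫ |v-β|^{-s} dq(v), where C_{s,τ} = (τ-s)/(2τ). -/
open MeasureTheory

private lemma rpow_subadd {s : ℝ} (hs0 : 0 ≤ s) (hs1 : s ≤ 1) {a b : ℝ} (ha : 0 ≤ a) (hb : 0 ≤ b) :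
    (a + b) ^ s ≤ a ^ s + b ^ s := by
  have h := NNReal.coe_le_coe.2
    (NNReal.rpow_add_le_add_rpow (Real.toNNReal a) (Real.toNNReal b) hs0 hs1)
  rw [← Real.toNNReal_add ha hb] at h
  simpa [NNReal.coe_rpow, Real.coe_toNNReal _ ha, Real.coe_toNNReal _ hb,
    Real.coe_toNNReal _ (add_nonneg ha hb)] using h

private lemma core_real_aux {A B C D : ℝ} (hA : 0 < A) (hB : 0 < B) (hC : 0 < C) (hD : 0 < D)
    (h1 : B ≤ A + C + D) (hDB : D ≤ B) :
    B⁻¹ + D⁻¹ ≤ A / B * (C⁻¹ + D⁻¹) + C / D * (A⁻¹ + B⁻¹) := by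
  have key : A*C*D + A*B*C ≤ A^2*D + A^2*C + C^2*B + C^2*A := by
    nlinarith [mul_le_mul_of_nonneg_left h1 (mul_pos hA hC).le,
      mul_le_mul_of_nonneg_left hDB (sq_nonneg C),
      mul_nonneg (sq_nonneg (A - C)) hD.le]
  rw [← sub_nonneg]
  have expand : A / B * (C⁻¹ + D⁻¹) + C / D * (A⁻¹ + B⁻¹) - (B⁻¹ + D⁻¹)
      = (A^2*D + A^2*C + C^2*B + C^2*A - (A*C*D + A*B*C)) / (A*B*C*D) := by
    field_simp
    ring
  rw [expand]
  exact div_nonneg (by linarith) (by positivity)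

private lemma core_real {A B C D : ℝ} (hA : 0 < A) (hB : 0 < B) (hC : 0 < C) (hD : 0 < D)
    (h1 : B ≤ A + C + D) (h2 : D ≤ A + B + C) :
    B⁻¹ + D⁻¹ ≤ A / B * (C⁻¹ + D⁻¹) + C / D * (A⁻¹ + B⁻¹) := by
  rcases le_total D B with h | h
  · exact core_real_aux hA hB hC hD h1 h
  · have := core_real_aux hC hD hA hB (by linarith) h
    linarith

private lemma pointwise_ineq {s : ℝ} (hs0 : 0 < s) (hs1 : s ≤ 1) (α β : ℂ) {v u : ℝ}
    (hvα : (v:ℂ) ≠ α) (hvβ : (v:ℂ) ≠ β) (huα : (u:ℂ) ≠ α) (huβ : (u:ℂ) ≠ β) :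
    (ENNReal.ofReal (‖(v:ℂ)-β‖^s))⁻¹ + (ENNReal.ofReal (‖(u:ℂ)-β‖^s))⁻¹ ≤
      ENNReal.ofReal (‖(v:ℂ)-α‖^s) * (ENNReal.ofReal (‖(v:ℂ)-β‖^s))⁻¹ *
        ((ENNReal.ofReal (‖(u:ℂ)-α‖^s))⁻¹ + (ENNReal.ofReal (‖(u:ℂ)-β‖^s))⁻¹) +
      ENNReal.ofReal (‖(u:ℂ)-α‖^s) * (ENNReal.ofReal (‖(u:ℂ)-β‖^s))⁻¹ *
        ((ENNReal.ofReal (‖(v:ℂ)-α‖^s))⁻¹ + (ENNReal.ofReal (‖(v:ℂ)-β‖^s))⁻¹) := by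
  set a := ‖(v:ℂ)-α‖ with hadef
  set b := ‖(v:ℂ)-β‖ with hbdef
  set c := ‖(u:ℂ)-α‖ with hcdef
  set d := ‖(u:ℂ)-β‖ with hddef
  have ha : 0 < a := norm_pos_iff.2 (sub_ne_zero.2 hvα)
  have hb : 0 < b := norm_pos_iff.2 (sub_ne_zero.2 hvβ)
  have hc : 0 < c := norm_pos_iff.2 (sub_ne_zero.2 huα)
  have hd : 0 < d := norm_pos_iff.2 (sub_ne_zero.2 huβ)
  have hA : 0 < a ^ s := Real.rpow_pos_of_pos ha _
  have hB : 0 < b ^ s := Real.rpow_pos_of_pos hb _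
  have hC : 0 < c ^ s := Real.rpow_pos_of_pos hc _
  have hD : 0 < d ^ s := Real.rpow_pos_of_pos hd _
  have tri1 : b ≤ a + c + d := by
    have he : (v:ℂ) - β = (((v:ℂ) - α) + ((α:ℂ) - (u:ℂ))) + ((u:ℂ) - β) := by ring
    calc b = ‖(((v:ℂ) - α) + ((α:ℂ) - (u:ℂ))) + ((u:ℂ) - β)‖ := by rw [hbdef, he]
      _ ≤ ‖((v:ℂ) - α) + ((α:ℂ) - (u:ℂ))‖ + d := norm_add_le _ _
      _ ≤ (a + ‖(α:ℂ) - (u:ℂ)‖) + d := by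
          exact add_le_add_left (norm_add_le _ _) _
      _ = a + c + d := by rw [norm_sub_rev]
  have tri2 : d ≤ a + b + c := by
    have he : (u:ℂ) - β = (((u:ℂ) - α) + ((α:ℂ) - (v:ℂ))) + ((v:ℂ) - β) := by ring
    calc d = ‖(((u:ℂ) - α) + ((α:ℂ) - (v:ℂ))) + ((v:ℂ) - β)‖ := by rw [hddef, he]
      _ ≤ ‖((u:ℂ) - α) + ((α:ℂ) - (v:ℂ))‖ + b := norm_add_le _ _
      _ ≤ (c + ‖(α:ℂ) - (v:ℂ)‖) + b := by
          exact add_le_add_left (norm_add_le _ _) _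
      _ = c + a + b := by rw [norm_sub_rev]
      _ = a + b + c := by ring
  have pow1 : b ^ s ≤ a ^ s + c ^ s + d ^ s := by
    calc b ^ s ≤ (a + c + d) ^ s := Real.rpow_le_rpow hb.le tri1 hs0.le
      _ ≤ (a + c) ^ s + d ^ s := rpow_subadd hs0.le hs1 (by positivity) hd.le
      _ ≤ (a ^ s + c ^ s) + d ^ s :=
          add_le_add_left (rpow_subadd hs0.le hs1 ha.le hc.le) _
  have pow2 : d ^ s ≤ a ^ s + b ^ s + c ^ s := by
    calc d ^ s ≤ (a + b + c) ^ s := Real.rpow_le_rpow hd.le tri2 hs0.le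
      _ ≤ (a + b) ^ s + c ^ s := rpow_subadd hs0.le hs1 (by positivity) hc.le
      _ ≤ (a ^ s + b ^ s) + c ^ s :=
          add_le_add_left (rpow_subadd hs0.le hs1 ha.le hb.le) _
  have core := core_real hA hB hC hD pow1 pow2
  rw [← ENNReal.ofReal_inv_of_pos hA, ← ENNReal.ofReal_inv_of_pos hB,
    ← ENNReal.ofReal_inv_of_pos hC, ← ENNReal.ofReal_inv_of_pos hD,
    ← ENNReal.ofReal_add (by positivity) (by positivity),
    ← ENNReal.ofReal_add (by positivity) (by positivity),
    ← ENNReal.ofReal_add (by positivity) (by positivity),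
    ← ENNReal.ofReal_mul (by positivity), ← ENNReal.ofReal_mul (by positivity),
    ← ENNReal.ofReal_mul (by positivity), ← ENNReal.ofReal_mul (by positivity),
    ← ENNReal.ofReal_add (by positivity) (by positivity)]
  apply ENNReal.ofReal_le_ofReal
  calc (b ^ s)⁻¹ + (d ^ s)⁻¹
      ≤ a ^ s / b ^ s * ((c ^ s)⁻¹ + (d ^ s)⁻¹) + c ^ s / d ^ s * ((a ^ s)⁻¹ + (b ^ s)⁻¹) := core
    _ = a ^ s * (b ^ s)⁻¹ * ((c ^ s)⁻¹ + (d ^ s)⁻¹)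
        + c ^ s * (d ^ s)⁻¹ * ((a ^ s)⁻¹ + (b ^ s)⁻¹) := by
        rw [div_eq_mul_inv, div_eq_mul_inv]

private lemma null_singleton {τ M : ℝ} (hτ0 : 0 < τ) (hM : 0 < M) (q : Measure ℝ)
    [IsFiniteMeasure q]
    (hreg : ∀ v δ : ℝ, 0 < δ → q (Set.Icc (v - δ) (v + δ)) ≤ ENNReal.ofReal (M * δ ^ τ))
    (x : ℝ) : q {x} = 0 := by
  by_contra hne
  have hfin : q {x} ≠ ⊤ := measure_ne_top q _
  have hpos : 0 < (q {x}).toReal := ENNReal.toReal_pos hne hfin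
  set ε := (q {x}).toReal / 2 with hε
  have hεpos : 0 < ε := by positivity
  set δ := (ε / M) ^ (1/τ) with hδ
  have hδpos : 0 < δ := Real.rpow_pos_of_pos (by positivity) _
  have hδτ : M * δ ^ τ = ε := by
    rw [hδ, ← Real.rpow_mul (by positivity), one_div, inv_mul_cancel₀ hτ0.ne',
      Real.rpow_one]
    field_simp
  have h1 : q {x} ≤ ENNReal.ofReal ε := by
    rw [← hδτ]
    refine le_trans (measure_mono ?_) (hreg x δ hδpos)
    intro y hy
    simp only [Set.mem_singleton_iff] at hy
    subst hy
    constructor <;> linarith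
  have h2 : ENNReal.ofReal ε < q {x} := by
    calc ENNReal.ofReal ε < ENNReal.ofReal (q {x}).toReal := by
          exact ENNReal.ofReal_lt_ofReal_iff hpos |>.2 (by rw [hε]; linarith)
      _ = q {x} := ENNReal.ofReal_toReal hfin
  exact absurd (lt_of_le_of_lt h1 h2) (lt_irrefl _)

private lemma boundI {τ s M : ℝ} (hτ0 : 0 < τ) (hs0 : 0 < s) (hsτ : s < τ)
    (hM : 0 < M) (q : Measure ℝ) [IsFiniteMeasure q] (hq0 : q ≠ 0)
    (hreg : ∀ v δ : ℝ, 0 < δ → q (Set.Icc (v - δ) (v + δ)) ≤ ENNReal.ofReal (M * δ ^ τ))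
    (hqsing : ∀ x : ℝ, q {x} = 0) (γ : ℂ) :
    ∫⁻ v : ℝ, (ENNReal.ofReal (‖(v : ℂ) - γ‖ ^ s))⁻¹ ∂q ≤
      ENNReal.ofReal (τ / (τ - s) * M ^ (s/τ) * (q Set.univ).toReal ^ (1 - s/τ)) := by
  have hτs : 0 < τ - s := by linarith
  set c := γ.re with hc
  set Qr := (q Set.univ).toReal with hQr
  have hQrpos : 0 < Qr := ENNReal.toReal_pos (by simpa [Measure.measure_univ_ne_zero] using hq0)
    (measure_ne_top q _)
  set T := (M / Qr) ^ (s/τ) with hT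
  have hTpos : 0 < T := Real.rpow_pos_of_pos (by positivity) _
  have hMT : M * T ^ (-(τ/s)) = Qr := by
    rw [hT, ← Real.rpow_mul (by positivity)]
    rw [show (s/τ) * (-(τ/s)) = -1 by field_simp]
    rw [Real.rpow_neg_one]
    field_simp
  -- step 1 : move to real center and a.e. rewrite
  have step1 : ∫⁻ v : ℝ, (ENNReal.ofReal (‖(v : ℂ) - γ‖ ^ s))⁻¹ ∂q ≤
      ∫⁻ v : ℝ, ENNReal.ofReal (|v - c| ^ (-s)) ∂q := by
    have hae : ∀ᵐ v ∂q, v ≠ c := by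
      have : q {v : ℝ | ¬ v ≠ c} = 0 := by
        simpa using hqsing c
      exact this
    refine lintegral_mono_ae ?_
    filter_upwards [hae] with v hv
    have habs : |v - c| ≤ ‖(v : ℂ) - γ‖ := by
      have : ((v : ℂ) - γ).re = v - c := by simp [hc]
      calc |v - c| = |((v : ℂ) - γ).re| := by rw [this]
        _ ≤ ‖(v : ℂ) - γ‖ := Complex.abs_re_le_norm _
    have hpos : 0 < |v - c| := abs_pos.2 (sub_ne_zero.2 hv)
    rw [Real.rpow_neg (abs_nonneg _), ENNReal.ofReal_inv_of_pos (Real.rpow_pos_of_pos hpos _)]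
    exact ENNReal.inv_le_inv' (ENNReal.ofReal_le_ofReal
      (Real.rpow_le_rpow (abs_nonneg _) habs hs0.le))
  refine le_trans step1 ?_
  -- step 2 : layer cake
  have hmble : Measurable fun v : ℝ => |v - c| ^ (-s) := by
    simp_rw [Real.rpow_neg (abs_nonneg _)]
    exact (((continuous_id.sub continuous_const).abs.rpow_const
      (fun x => Or.inr hs0.le)).measurable).inv
  rw [lintegral_eq_lintegral_meas_lt q (Filter.Eventually.of_forall fun v => by positivity)
    hmble.aemeasurable]
  -- step 3 : split
  rw [← Set.Ioc_union_Ioi_eq_Ioi hTpos.le,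
    lintegral_union measurableSet_Ioi (Set.Ioc_disjoint_Ioi le_rfl)]
  have layer_subset : ∀ t : ℝ, 0 < t →
      {v : ℝ | t < |v - c| ^ (-s)} ⊆ Set.Icc (c - t ^ (-(1/s))) (c + t ^ (-(1/s))) := by
    intro t ht v hv
    simp only [Set.mem_setOf_eq] at hv
    set r := t ^ (-(1/s)) with hr
    have hrpos : 0 < r := Real.rpow_pos_of_pos ht _
    have hlt : |v - c| < r := by
      by_contra hcon
      push_neg at hcon
      have h1 : |v - c| ^ (-s) ≤ r ^ (-s) :=
        Real.rpow_le_rpow_of_nonpos hrpos hcon (by linarith)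
      have h2 : r ^ (-s) = t := by
        rw [hr, ← Real.rpow_mul ht.le, show -(1/s) * -s = 1 by field_simp, Real.rpow_one]
      rw [h2] at h1
      linarith
    have h3 := abs_lt.1 hlt
    rw [Set.mem_Icc]
    constructor <;> linarith [h3.1, h3.2]
  have bound1 : ∫⁻ t in Set.Ioc (0:ℝ) T, q {v : ℝ | t < |v - c| ^ (-s)} ≤
      ENNReal.ofReal (Qr * T) := by
    calc ∫⁻ t in Set.Ioc (0:ℝ) T, q {v : ℝ | t < |v - c| ^ (-s)}
        ≤ ∫⁻ _t in Set.Ioc (0:ℝ) T, q Set.univ :=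
          lintegral_mono fun t => measure_mono (Set.subset_univ _)
      _ = q Set.univ * ENNReal.ofReal T := by
          rw [setLIntegral_const, Real.volume_Ioc, sub_zero]
      _ = ENNReal.ofReal (Qr * T) := by
          rw [ENNReal.ofReal_mul hQrpos.le, hQr, ENNReal.ofReal_toReal (measure_ne_top q _)]
  have bound2 : ∫⁻ t in Set.Ioi T, q {v : ℝ | t < |v - c| ^ (-s)} ≤
      ENNReal.ofReal (Qr * T * (s / (τ - s))) := by
    have hp : -(τ/s) < -1 := by
      rw [neg_lt_neg_iff]
      rw [lt_div_iff₀ hs0]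
      linarith
    have hbd : ∀ t ∈ Set.Ioi T, q {v : ℝ | t < |v - c| ^ (-s)} ≤
        ENNReal.ofReal (M * t ^ (-(τ/s))) := by
      intro t ht
      have ht0 : 0 < t := lt_trans hTpos ht
      have hrpos : 0 < t ^ (-(1/s)) := Real.rpow_pos_of_pos ht0 _
      refine le_trans (measure_mono (layer_subset t ht0)) ?_
      refine le_trans (hreg c _ hrpos) (le_of_eq ?_)
      congr 1
      rw [← Real.rpow_mul ht0.le, show -(1/s) * τ = -(τ/s) by ring]
    calc ∫⁻ t in Set.Ioi T, q {v : ℝ | t < |v - c| ^ (-s)}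
        ≤ ∫⁻ t in Set.Ioi T, ENNReal.ofReal (M * t ^ (-(τ/s))) := by
          exact setLIntegral_mono' measurableSet_Ioi hbd
      _ = ENNReal.ofReal (∫ t in Set.Ioi T, M * t ^ (-(τ/s))) := by
          rw [← ofReal_integral_eq_lintegral_ofReal]
          · exact (integrableOn_Ioi_rpow_of_lt hp hTpos).const_mul M
          · refine (ae_restrict_iff' measurableSet_Ioi).2 (Filter.Eventually.of_forall ?_)
            intro t ht
            have : (0:ℝ) < t := lt_trans hTpos ht
            positivity
      _ ≤ ENNReal.ofReal (Qr * T * (s / (τ - s))) := by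
          apply ENNReal.ofReal_le_ofReal
          rw [integral_const_mul, integral_Ioi_rpow_of_lt hp hTpos]
          have hTe : T ^ (-(τ/s) + 1) = T ^ (-(τ/s)) * T := by
            rw [Real.rpow_add hTpos, Real.rpow_one]
          rw [hTe]
          have hne : -(τ/s) + 1 ≠ 0 := by
            have : (1:ℝ) < τ/s := by rw [lt_div_iff₀ hs0]; linarith
            intro h; rw [neg_add_eq_zero] at h; rw [← h] at this; exact lt_irrefl _ this
          have hst : τ - s ≠ 0 := hτs.ne'
          have hPT : M * (-(T ^ (-(τ / s)) * T) / (-(τ / s) + 1))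
              = M * T ^ (-(τ/s)) * T * (s / (τ - s)) := by
            generalize T ^ (-(τ/s)) = P
            have hst2 : s - τ ≠ 0 := fun h => hst (by linarith)
            rw [show -(τ/s) + 1 = (s - τ)/s by rw [sub_div, div_self hs0.ne']; ring,
              div_div_eq_mul_div, show s - τ = -(τ - s) by ring, div_neg]
            ring
          rw [hPT, hMT]
  refine le_trans (add_le_add bound1 bound2) ?_
  rw [← ENNReal.ofReal_add (by positivity) (by positivity)]
  apply ENNReal.ofReal_le_ofReal
  -- real arithmetic
  have hQT : Qr * T = M ^ (s/τ) * Qr ^ (1 - s/τ) := by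
    rw [hT, Real.div_rpow hM.le hQrpos.le, div_eq_mul_inv, ← Real.rpow_neg hQrpos.le]
    rw [show (1 : ℝ) - s/τ = 1 + -(s/τ) by ring, Real.rpow_add hQrpos, Real.rpow_one]
    ring
  have h1 : Qr * T + Qr * T * (s / (τ - s)) = Qr * T * (τ / (τ - s)) := by
    field_simp
    ring
  rw [h1, hQT]
  ring_nf
  exact le_refl _

theorem stmt3 (τ s M : ℝ) (hτ0 : 0 < τ) (hτ1 : τ ≤ 1) (hs0 : 0 < s) (hsτ : s < τ)
    (hM : 0 < M) (q : Measure ℝ) [IsFiniteMeasure q] (hq0 : q ≠ 0)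
    (hreg : ∀ v δ : ℝ, 0 < δ → q (Set.Icc (v - δ) (v + δ)) ≤ ENNReal.ofReal (M * δ ^ τ))
    (α β : ℂ) :
    ENNReal.ofReal ((τ - s) / (2 * τ) * ((q Set.univ).toReal / M) ^ (s / τ)) *
        ∫⁻ v : ℝ, (ENNReal.ofReal (‖(v : ℂ) - β‖ ^ s))⁻¹ ∂q ≤
      ∫⁻ v : ℝ, ENNReal.ofReal (‖(v : ℂ) - α‖ ^ s) *
        (ENNReal.ofReal (‖(v : ℂ) - β‖ ^ s))⁻¹ ∂q := by
  have hτs : 0 < τ - s := by linarith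
  have hs1 : s ≤ 1 := le_trans hsτ.le hτ1
  have hqsing : ∀ x : ℝ, q {x} = 0 := null_singleton hτ0 hM q hreg
  set Qr := (q Set.univ).toReal with hQrdef
  have hQfin : q Set.univ ≠ ⊤ := measure_ne_top q _
  have hQne : q Set.univ ≠ 0 := by simpa [Measure.measure_univ_ne_zero] using hq0
  have hQrpos : 0 < Qr := ENNReal.toReal_pos hQne hQfin
  set Kr := τ / (τ - s) * M ^ (s/τ) * Qr ^ (1 - s/τ) with hKr
  have hKrpos : 0 < Kr := by positivity
  have contabs : ∀ γ : ℂ, Continuous fun v : ℝ => ‖(v:ℂ) - γ‖ ^ s := by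
    intro γ
    exact (continuous_norm.comp
      (Complex.continuous_ofReal.sub continuous_const)).rpow_const (fun x => Or.inr hs0.le)
  have mfα : Measurable fun v : ℝ => (ENNReal.ofReal (‖(v:ℂ) - α‖ ^ s))⁻¹ :=
    ((contabs α).measurable.ennreal_ofReal).inv
  have mfβ : Measurable fun v : ℝ => (ENNReal.ofReal (‖(v:ℂ) - β‖ ^ s))⁻¹ :=
    ((contabs β).measurable.ennreal_ofReal).inv
  have mg : Measurable fun v : ℝ => ENNReal.ofReal (‖(v:ℂ) - α‖ ^ s) *
      (ENNReal.ofReal (‖(v:ℂ) - β‖ ^ s))⁻¹ :=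
    ((contabs α).measurable.ennreal_ofReal).mul mfβ
  have mfαβ : Measurable fun u : ℝ => (ENNReal.ofReal (‖(u:ℂ) - α‖ ^ s))⁻¹
      + (ENNReal.ofReal (‖(u:ℂ) - β‖ ^ s))⁻¹ := mfα.add mfβ
  set Iα := ∫⁻ v : ℝ, (ENNReal.ofReal (‖(v:ℂ) - α‖ ^ s))⁻¹ ∂q with hIαdef
  set Iβ := ∫⁻ v : ℝ, (ENNReal.ofReal (‖(v:ℂ) - β‖ ^ s))⁻¹ ∂q with hIβdef
  set J := ∫⁻ v : ℝ, ENNReal.ofReal (‖(v:ℂ) - α‖ ^ s) *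
      (ENNReal.ofReal (‖(v:ℂ) - β‖ ^ s))⁻¹ ∂q with hJdef
  have hKα : Iα ≤ ENNReal.ofReal Kr := boundI hτ0 hs0 hsτ hM q hq0 hreg hqsing α
  have hKβ : Iβ ≤ ENNReal.ofReal Kr := boundI hτ0 hs0 hsτ hM q hq0 hreg hqsing β
  have hnull : q {x : ℝ | (x:ℂ) = α ∨ (x:ℂ) = β} = 0 := by
    refine measure_mono_null ?_
      (measure_union_null (hqsing α.re) (hqsing β.re) : q ({α.re} ∪ {β.re}) = 0)
    intro x hx
    rcases hx with h | h
    · left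
      simp only [Set.mem_singleton_iff]
      rw [← h]
      simp
    · right
      simp only [Set.mem_singleton_iff]
      rw [← h]
      simp
  have hae : ∀ᵐ x : ℝ ∂q, (x:ℂ) ≠ α ∧ (x:ℂ) ≠ β := by
    have h := measure_eq_zero_iff_ae_notMem.mp hnull
    filter_upwards [h] with x hx
    have hx' : ¬((x:ℂ) = α ∨ (x:ℂ) = β) := hx
    push_neg at hx'
    exact hx'
  have inner : ∀ᵐ v : ℝ ∂q,
      (ENNReal.ofReal (‖(v:ℂ) - β‖ ^ s))⁻¹ * q Set.univ + Iβ ≤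
      ENNReal.ofReal (‖(v:ℂ) - α‖ ^ s) *
          (ENNReal.ofReal (‖(v:ℂ) - β‖ ^ s))⁻¹ * (Iα + Iβ)
        + J * ((ENNReal.ofReal (‖(v:ℂ) - α‖ ^ s))⁻¹
          + (ENNReal.ofReal (‖(v:ℂ) - β‖ ^ s))⁻¹) := by
    filter_upwards [hae] with v hv
    have step : ∫⁻ u : ℝ, ((ENNReal.ofReal (‖(v:ℂ) - β‖ ^ s))⁻¹
          + (ENNReal.ofReal (‖(u:ℂ) - β‖ ^ s))⁻¹) ∂q ≤
        ∫⁻ u : ℝ, (ENNReal.ofReal (‖(v:ℂ) - α‖ ^ s) *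
            (ENNReal.ofReal (‖(v:ℂ) - β‖ ^ s))⁻¹ *
            ((ENNReal.ofReal (‖(u:ℂ) - α‖ ^ s))⁻¹
              + (ENNReal.ofReal (‖(u:ℂ) - β‖ ^ s))⁻¹)
          + ENNReal.ofReal (‖(u:ℂ) - α‖ ^ s) *
            (ENNReal.ofReal (‖(u:ℂ) - β‖ ^ s))⁻¹ *
            ((ENNReal.ofReal (‖(v:ℂ) - α‖ ^ s))⁻¹
              + (ENNReal.ofReal (‖(v:ℂ) - β‖ ^ s))⁻¹)) ∂q := by
      refine lintegral_mono_ae ?_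
      filter_upwards [hae] with u hu
      exact pointwise_ineq hs0 hs1 α β hv.1 hv.2 hu.1 hu.2
    rw [lintegral_add_left measurable_const, lintegral_const,
      lintegral_add_left (mfαβ.const_mul _),
      lintegral_const_mul _ mfαβ, lintegral_add_left mfα,
      lintegral_mul_const _ mg] at step
    exact step
  have outer : Iβ * q Set.univ + Iβ * q Set.univ ≤ J * (Iα + Iβ) + J * (Iα + Iβ) := by
    have step2 := lintegral_mono_ae inner
    rw [lintegral_add_left (mfβ.mul_const _), lintegral_mul_const _ mfβ, lintegral_const,
      lintegral_add_left (mg.mul_const _), lintegral_mul_const _ mg,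
      lintegral_const_mul _ mfαβ, lintegral_add_left mfα] at step2
    exact step2
  have cancel2 : Iβ * q Set.univ ≤ J * (Iα + Iβ) := by
    have h2 : (2:ENNReal) * (Iβ * q Set.univ) ≤ 2 * (J * (Iα + Iβ)) := by
      rw [two_mul, two_mul]; exact outer
    exact (ENNReal.mul_le_mul_iff_right (by norm_num) (by norm_num)).mp h2
  have hIK : Iβ * q Set.univ ≤ J * (2 * ENNReal.ofReal Kr) := by
    refine le_trans cancel2 (mul_le_mul_right ?_ J)
    rw [two_mul]
    exact add_le_add hKα hKβ
  set Cst := (τ - s) / (2 * τ) * (Qr / M) ^ (s / τ) with hCst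
  have hCK : ENNReal.ofReal Cst * (2 * ENNReal.ofReal Kr) ≤ q Set.univ := by
    have h2K : (2:ENNReal) * ENNReal.ofReal Kr = ENNReal.ofReal (2 * Kr) := by
      rw [ENNReal.ofReal_mul (by norm_num : (0:ℝ) ≤ 2), ENNReal.ofReal_ofNat]
    rw [h2K, ← ENNReal.ofReal_mul (by positivity), ← ENNReal.ofReal_toReal hQfin]
    apply ENNReal.ofReal_le_ofReal
    refine le_of_eq ?_
    have e1 : (Qr/M) ^ (s/τ) * M ^ (s/τ) = Qr ^ (s/τ) := by
      rw [← Real.mul_rpow (by positivity) hM.le, div_mul_cancel₀ _ hM.ne']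
    have e2 : Qr ^ (s/τ) * Qr ^ (1 - s/τ) = Qr := by
      rw [← Real.rpow_add hQrpos, show s/τ + (1 - s/τ) = 1 by ring, Real.rpow_one]
    have e3 : (τ - s)/(2*τ) * 2 * (τ/(τ-s)) = 1 := by field_simp
    calc Cst * (2 * Kr)
        = ((τ-s)/(2*τ) * 2 * (τ/(τ-s))) * (((Qr/M)^(s/τ) * M^(s/τ)) * Qr^(1-s/τ)) := by
          rw [hCst, hKr]; ring
      _ = 1 * (Qr^(s/τ) * Qr^(1-s/τ)) := by rw [e1, e3]
      _ = Qr := by rw [one_mul, e2]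
  have final : q Set.univ * (ENNReal.ofReal Cst * Iβ) ≤ q Set.univ * J := by
    calc q Set.univ * (ENNReal.ofReal Cst * Iβ)
        = ENNReal.ofReal Cst * (Iβ * q Set.univ) := by ring
      _ ≤ ENNReal.ofReal Cst * (J * (2 * ENNReal.ofReal Kr)) := mul_le_mul_right hIK _
      _ = (ENNReal.ofReal Cst * (2 * ENNReal.ofReal Kr)) * J := by ring
      _ ≤ q Set.univ * J := mul_le_mul_left hCK _
  exact (ENNReal.mul_le_mul_iff_right hQne hQfin).mp final
end

section
/- (Connes area formula, lattice version) Fix u⁽¹⁾, u⁽²⁾, u⁽³⁾ ∈ ℤ², and for a ∈ ℤ²* (the dual lattice, i.e., points of ℤ² + (1/2,1/2), avoiding the lines through the vertices) let α_i(a) ∈ (−π,π) be the signed angle at a subtended from u^{(i+1)} to u^{(i+2)} (indices mod 3). Let g: (−π,π) → ℝ be a bounded odd function with g(α) = α + O(α³) near α = 0. Then Σ_{a∈ℤ²*} Σ_{i=1}^{3} g(α_i(a)) = 2π · Area(Δ(u⁽¹⁾,u⁽²⁾,u⁽³⁾)), where Area denotes the oriented area of the triangle. -/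
open Complex Finset

noncomputable section

namespace Connes15

def pt (p : ℤ × ℤ) : ℂ := (((p.1 : ℝ) + 1/2 : ℝ) : ℂ) + (((p.2 : ℝ) + 1/2 : ℝ) : ℂ) * Complex.I
def vx (v : ℤ × ℤ) : ℂ := (v.1 : ℂ) + (v.2 : ℂ) * Complex.I

@[simp] lemma pt_re (p : ℤ × ℤ) : (pt p).re = (p.1:ℝ) + 1/2 := by simp [pt]
@[simp] lemma pt_im (p : ℤ × ℤ) : (pt p).im = (p.2:ℝ) + 1/2 := by simp [pt]
@[simp] lemma vx_re (v : ℤ × ℤ) : (vx v).re = (v.1:ℝ) := by simp [vx]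
@[simp] lemma vx_im (v : ℤ × ℤ) : (vx v).im = (v.2:ℝ) := by simp [vx]

/-- the vector from a dual lattice point to a lattice point -/
def Ae (v : ℤ × ℤ) (p : ℤ × ℤ) : ℂ := vx v - pt p

@[simp] lemma Ae_re (v p : ℤ × ℤ) : (Ae v p).re = (v.1:ℝ) - ((p.1:ℝ) + 1/2) := by simp [Ae]
@[simp] lemma Ae_im (v p : ℤ × ℤ) : (Ae v p).im = (v.2:ℝ) - ((p.2:ℝ) + 1/2) := by simp [Ae]

lemma half_ne (k m : ℤ) : ((k:ℝ)) ≠ (m:ℝ) + 1/2 := by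
  intro h
  have h2 : ((2*k : ℤ) : ℝ) = ((2*m+1 : ℤ) : ℝ) := by push_cast; linarith
  have := Int.cast_injective h2
  omega

lemma Ae_im_ne (v p : ℤ × ℤ) : (Ae v p).im ≠ 0 := by
  simp only [Ae_im, sub_ne_zero]
  exact half_ne v.2 p.2

lemma Ae_ne (v p : ℤ × ℤ) : Ae v p ≠ 0 := by
  intro h
  exact Ae_im_ne v p (by rw [h]; simp)

/-- cross product determinant -/
def Dd (v w : ℤ × ℤ) (p : ℤ × ℤ) : ℝ :=
  ((v.1:ℝ) - ((p.1:ℝ) + 1/2)) * ((w.2:ℝ) - ((p.2:ℝ) + 1/2))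
    - ((v.2:ℝ) - ((p.2:ℝ) + 1/2)) * ((w.1:ℝ) - ((p.1:ℝ) + 1/2))

lemma ratio_im (v w p : ℤ × ℤ) :
    (Ae w p / Ae v p).im = Dd v w p / Complex.normSq (Ae v p) := by
  rw [Complex.div_im, Dd]
  simp only [Ae_re, Ae_im]
  ring

lemma ratio_im_sign (v w p : ℤ × ℤ) : 0 < (Ae w p / Ae v p).im ↔ 0 < Dd v w p := by
  rw [ratio_im]
  have h : 0 < Complex.normSq (Ae v p) := Complex.normSq_pos.2 (Ae_ne v p)
  rw [div_pos_iff]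
  constructor
  · rintro (⟨h1, _⟩ | ⟨_, h2⟩)
    · exact h1
    · linarith
  · intro hh; exact Or.inl ⟨hh, h⟩


/-- branch-cut correction term -/
def kap (A B : ℂ) : ℤ :=
  (if 0 < A.im ∧ B.im < 0 ∧ 0 < (B / A).im then 1 else 0)
    - (if A.im < 0 ∧ 0 < B.im ∧ (B / A).im < 0 then 1 else 0)

lemma arg_pos_of_im_pos {z : ℂ} (hz : 0 < z.im) : 0 < z.arg := by
  rcases (Complex.arg_nonneg_iff.2 hz.le).lt_or_eq with h | h
  · exact h
  · exfalso
    have := Complex.arg_eq_zero_iff.1 h.symm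
    linarith [this.2]

lemma arg_lt_pi_of_im_ne {z : ℂ} (hz : z.im ≠ 0) : z.arg < Real.pi :=
  Complex.arg_lt_pi_iff.2 (Or.inr hz)

lemma pin {k c : ℤ} (h1 : 2*Real.pi * ((c:ℝ) - 1) < 2*Real.pi*(k:ℝ))
    (h2 : 2*Real.pi*(k:ℝ) < 2*Real.pi*((c:ℝ)+1)) : k = c := by
  have hπ : (0:ℝ) < 2*Real.pi := by positivity
  have l1 : (c:ℝ) - 1 < (k:ℝ) := lt_of_mul_lt_mul_left h1 hπ.le
  have l2 : (k:ℝ) < (c:ℝ) + 1 := lt_of_mul_lt_mul_left h2 hπ.le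
  have m1 : c - 1 < k := by exact_mod_cast l1
  have m2 : k < c + 1 := by exact_mod_cast l2
  omega

lemma arg_jump {A B : ℂ} (hA : A.im ≠ 0) (hB : B.im ≠ 0) (hD : (B / A).im ≠ 0) :
    (B / A).arg = B.arg - A.arg + 2 * Real.pi * (kap A B : ℝ) := by
  have hA0 : A ≠ 0 := fun h => hA (by simp [h])
  have hB0 : B ≠ 0 := fun h => hB (by simp [h])
  have hang : (((B / A).arg : ℝ) : Real.Angle) = ((B.arg - A.arg : ℝ) : Real.Angle) := by
    rw [Complex.arg_div_coe_angle hB0 hA0, Real.Angle.coe_sub]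
  obtain ⟨k, hk⟩ := Real.Angle.angle_eq_iff_two_pi_dvd_sub.mp hang
  have hk' : 2*Real.pi*(k:ℝ) = (B / A).arg - (B.arg - A.arg) := by linarith
  have hπ := Real.pi_pos
  have hr1 : -Real.pi < (B / A).arg := Complex.neg_pi_lt_arg _
  have hr2 : (B / A).arg < Real.pi := arg_lt_pi_of_im_ne hD
  rcases lt_or_gt_of_ne hA with hAn | hAp
  · have hAl : -Real.pi < A.arg := Complex.neg_pi_lt_arg _
    have hAu : A.arg < 0 := Complex.arg_neg_iff.2 hAn
    rcases lt_or_gt_of_ne hB with hBn | hBp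
    · have hBl : -Real.pi < B.arg := Complex.neg_pi_lt_arg _
      have hBu : B.arg < 0 := Complex.arg_neg_iff.2 hBn
      have hkc : k = 0 := pin (by push_cast; linarith) (by push_cast; linarith)
      have hkap : kap A B = 0 := by
        rw [kap, if_neg (by rintro ⟨h1, _, _⟩; linarith),
          if_neg (by rintro ⟨_, h2, _⟩; linarith)]
        norm_num
      rw [hkap]; rw [hkc] at hk'; push_cast at hk' ⊢; linarith
    · have hBl : 0 < B.arg := arg_pos_of_im_pos hBp
      have hBu : B.arg < Real.pi := arg_lt_pi_of_im_ne (ne_of_gt hBp)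
      rcases lt_or_gt_of_ne hD with hDn | hDp
      · have hru : (B / A).arg < 0 := Complex.arg_neg_iff.2 hDn
        have hkc : k = -1 := pin (by push_cast; linarith) (by push_cast; linarith)
        have hkap : kap A B = -1 := by
          rw [kap, if_neg (by rintro ⟨h1, _, _⟩; linarith), if_pos ⟨hAn, hBp, hDn⟩]
          norm_num
        rw [hkap]; rw [hkc] at hk'; push_cast at hk' ⊢; linarith
      · have hrl : 0 < (B / A).arg := arg_pos_of_im_pos hDp
        have hkc : k = 0 := pin (by push_cast; linarith) (by push_cast; linarith)
        have hkap : kap A B = 0 := by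
          rw [kap, if_neg (by rintro ⟨h1, _, _⟩; linarith),
            if_neg (by rintro ⟨_, _, h3⟩; linarith)]
          norm_num
        rw [hkap]; rw [hkc] at hk'; push_cast at hk' ⊢; linarith
  · have hAl : 0 < A.arg := arg_pos_of_im_pos hAp
    have hAu : A.arg < Real.pi := arg_lt_pi_of_im_ne (ne_of_gt hAp)
    rcases lt_or_gt_of_ne hB with hBn | hBp
    · have hBl : -Real.pi < B.arg := Complex.neg_pi_lt_arg _
      have hBu : B.arg < 0 := Complex.arg_neg_iff.2 hBn
      rcases lt_or_gt_of_ne hD with hDn | hDp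
      · have hru : (B / A).arg < 0 := Complex.arg_neg_iff.2 hDn
        have hkc : k = 0 := pin (by push_cast; linarith) (by push_cast; linarith)
        have hkap : kap A B = 0 := by
          rw [kap, if_neg (by rintro ⟨_, _, h3⟩; linarith),
            if_neg (by rintro ⟨h1, _, _⟩; linarith)]
          norm_num
        rw [hkap]; rw [hkc] at hk'; push_cast at hk' ⊢; linarith
      · have hrl : 0 < (B / A).arg := arg_pos_of_im_pos hDp
        have hkc : k = 1 := pin (by push_cast; linarith) (by push_cast; linarith)
        have hkap : kap A B = 1 := by
          rw [kap, if_pos ⟨hAp, hBn, hDp⟩, if_neg (by rintro ⟨h1, _, _⟩; linarith)]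
          norm_num
        rw [hkap]; rw [hkc] at hk'; push_cast at hk' ⊢; linarith
    · have hBl : 0 < B.arg := arg_pos_of_im_pos hBp
      have hBu : B.arg < Real.pi := arg_lt_pi_of_im_ne (ne_of_gt hBp)
      have hkc : k = 0 := pin (by push_cast; linarith) (by push_cast; linarith)
      have hkap : kap A B = 0 := by
        rw [kap, if_neg (by rintro ⟨_, h2, _⟩; linarith),
          if_neg (by rintro ⟨h1, _, _⟩; linarith)]
        norm_num
      rw [hkap]; rw [hkc] at hk'; push_cast at hk' ⊢; linarith


/-- comparison helpers between half-integers and integers -/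
lemma half_lt_int {m k : ℤ} : (m:ℝ) + 1/2 < (k:ℝ) ↔ m < k := by
  constructor
  · intro h
    have h2 : ((2*m+1 : ℤ):ℝ) < ((2*k : ℤ):ℝ) := by push_cast; linarith
    have h3 : (2*m+1 : ℤ) < (2*k : ℤ) := by exact_mod_cast h2
    omega
  · intro h
    have h' : m + 1 ≤ k := h
    have : ((m+1 : ℤ):ℝ) ≤ (k:ℝ) := by exact_mod_cast h'
    push_cast at this; linarith

lemma int_lt_half {m k : ℤ} : (k:ℝ) < (m:ℝ) + 1/2 ↔ k ≤ m := by
  constructor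
  · intro h
    have h2 : ((2*k : ℤ):ℝ) < ((2*m+1 : ℤ):ℝ) := by push_cast; linarith
    have h3 : (2*k : ℤ) < (2*m+1 : ℤ) := by exact_mod_cast h2
    omega
  · intro h
    have : (k:ℝ) ≤ (m:ℝ) := by exact_mod_cast h
    linarith

/-- the baseline (vertical ray correction) term -/
def bb (v w : ℤ × ℤ) (p : ℤ × ℤ) : ℤ :=
  if 0 ≤ p.1 then ((if p.2 < v.2 then 1 else 0) - (if p.2 < w.2 then 1 else 0)) else 0

/-- per-edge summand: branch correction minus baseline -/
def tau (v w : ℤ × ℤ) (p : ℤ × ℤ) : ℤ := kap (Ae v p) (Ae w p) - bb v w p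

lemma bb_cycle (u0 u1 u2 p : ℤ × ℤ) : bb u1 u2 p + bb u2 u0 p + bb u0 u1 p = 0 := by
  unfold bb; split_ifs <;> omega

lemma Dd_swap (v w p : ℤ × ℤ) : Dd w v p = - Dd v w p := by unfold Dd; ring

lemma kap_swap {A B : ℂ} (hA : A.im ≠ 0) (hB : B.im ≠ 0) (hD : (B/A).im ≠ 0) :
    kap B A = - kap A B := by
  have hBA0 : (B/A) ≠ 0 := fun h => hD (by rw [h]; simp)
  have hn : 0 < Complex.normSq (B/A) := Complex.normSq_pos.2 hBA0
  have hAB : (A/B).im = -(B/A).im / Complex.normSq (B/A) := by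
    rw [← inv_div, Complex.inv_im]
  have h1 : 0 < (A/B).im ↔ (B/A).im < 0 := by
    rw [hAB]
    constructor
    · intro h; by_contra hc; push_neg at hc
      have : -(B/A).im / Complex.normSq (B/A) ≤ 0 :=
        div_nonpos_of_nonpos_of_nonneg (by linarith) hn.le
      linarith
    · intro h; apply div_pos (by linarith) hn
  have h2 : (A/B).im < 0 ↔ 0 < (B/A).im := by
    rw [hAB]
    constructor
    · intro h; by_contra hc; push_neg at hc
      have : 0 ≤ -(B/A).im / Complex.normSq (B/A) := div_nonneg (by linarith) hn.le
      linarith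
    · intro h
      apply div_neg_of_neg_of_pos (by linarith) hn
  rcases lt_or_gt_of_ne hA with hA' | hA' <;> rcases lt_or_gt_of_ne hB with hB' | hB' <;>
      rcases lt_or_gt_of_ne hD with hD' | hD' <;>
    simp [kap, h1, h2, hA', hB', hD', hA'.not_gt, hB'.not_gt, hD'.not_gt]

lemma bb_swap (v w p : ℤ × ℤ) : bb w v p = - bb v w p := by
  unfold bb; split_ifs <;> ring

lemma tau_swap (v w p : ℤ × ℤ) (hD : (Ae w p / Ae v p).im ≠ 0) :
    tau w v p = - tau v w p := by
  unfold tau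
  rw [kap_swap (Ae_im_ne v p) (Ae_im_ne w p) hD, bb_swap]
  ring


lemma sum_arg_eq (u : Fin 3 → ℤ × ℤ) (p : ℤ × ℤ)
    (him : ∀ i j : Fin 3, i ≠ j → ((Ae (u i) p) / (Ae (u j) p)).im ≠ 0) :
    ∑ i : Fin 3, Complex.arg (Ae (u (i + 2)) p / Ae (u (i + 1)) p)
      = 2 * Real.pi *
        ((tau (u 1) (u 2) p + tau (u 2) (u 0) p + tau (u 0) (u 1) p : ℤ) : ℝ) := by
  have h21 := him 2 1 (by decide)
  have h02 := him 0 2 (by decide)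
  have h10 := him 1 0 (by decide)
  rw [Fin.sum_univ_three]
  simp only [show ((0:Fin 3)+2) = 2 from rfl, show ((0:Fin 3)+1) = 1 from rfl,
    show ((1:Fin 3)+2) = 0 from rfl, show ((1:Fin 3)+1) = 2 from rfl,
    show ((2:Fin 3)+2) = 1 from rfl, show ((2:Fin 3)+1) = 0 from rfl]
  rw [arg_jump (Ae_im_ne (u 1) p) (Ae_im_ne (u 2) p) h21,
    arg_jump (Ae_im_ne (u 2) p) (Ae_im_ne (u 0) p) h02,
    arg_jump (Ae_im_ne (u 0) p) (Ae_im_ne (u 1) p) h10]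
  have hb : ((bb (u 1) (u 2) p + bb (u 2) (u 0) p + bb (u 0) (u 1) p : ℤ) : ℝ) = (0:ℝ) := by
    exact_mod_cast congrArg (fun z : ℤ => (z:ℝ)) (bb_cycle (u 0) (u 1) (u 2) p)
  simp only [tau]
  push_cast at hb ⊢
  linear_combination 2 * Real.pi * hb


lemma Ae_im_pos_iff (v p : ℤ × ℤ) : 0 < (Ae v p).im ↔ p.2 < v.2 := by
  rw [Ae_im, sub_pos]; exact half_lt_int

lemma Ae_im_neg_iff (v p : ℤ × ℤ) : (Ae v p).im < 0 ↔ v.2 ≤ p.2 := by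
  rw [Ae_im, sub_neg]; exact int_lt_half

lemma tau_row_zero (v w p : ℤ × ℤ) (h : p.2 < min v.2 w.2 ∨ max v.2 w.2 ≤ p.2) :
    tau v w p = 0 := by
  rcases h with h | h
  · have hv : p.2 < v.2 := lt_of_lt_of_le h (min_le_left _ _)
    have hw : p.2 < w.2 := lt_of_lt_of_le h (min_le_right _ _)
    rw [tau, kap,
      if_neg (fun hc => absurd ((Ae_im_neg_iff w p).1 hc.2.1) (by omega)),
      if_neg (fun hc => absurd ((Ae_im_neg_iff v p).1 hc.1) (by omega))]
    simp [bb, hv, hw]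
  · have hv : v.2 ≤ p.2 := le_trans (le_max_left _ _) h
    have hw : w.2 ≤ p.2 := le_trans (le_max_right _ _) h
    rw [tau, kap,
      if_neg (fun hc => absurd ((Ae_im_pos_iff v p).1 hc.1) (by omega)),
      if_neg (fun hc => absurd ((Ae_im_pos_iff w p).1 hc.2.1) (by omega))]
    simp [bb, not_lt.2 hv, not_lt.2 hw]

lemma tau_strip_down (v w p : ℤ × ℤ) (h1 : w.2 ≤ p.2) (h2 : p.2 < v.2)
    (hD : Dd v w p ≠ 0) :
    tau v w p = (if 0 < Dd v w p then 1 else 0) - (if 0 ≤ p.1 then 1 else 0) := by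
  have hA : 0 < (Ae v p).im := (Ae_im_pos_iff v p).2 h2
  have hB : (Ae w p).im < 0 := (Ae_im_neg_iff w p).2 h1
  have hbb : bb v w p = (if 0 ≤ p.1 then 1 else 0) := by
    simp only [bb, if_pos h2, if_neg (not_lt.2 h1)]
    split_ifs <;> ring
  by_cases hpos : 0 < Dd v w p
  · have himr : 0 < (Ae w p / Ae v p).im := (ratio_im_sign v w p).2 hpos
    rw [tau, kap, if_pos ⟨hA, hB, himr⟩,
      if_neg (by rintro ⟨hA', _, _⟩; linarith), if_pos hpos, hbb]
    ring
  · have hneg : Dd v w p < 0 := (not_lt.1 hpos).lt_of_ne hD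
    have himr : (Ae w p / Ae v p).im < 0 := by
      rw [ratio_im]
      exact div_neg_of_neg_of_pos hneg (Complex.normSq_pos.2 (Ae_ne v p))
    rw [tau, kap, if_neg (by rintro ⟨_, _, h3⟩; linarith),
      if_neg (by rintro ⟨hA', _, _⟩; linarith), if_neg hpos, hbb]
    ring

/-- reflection through the midpoint of the edge -/
def er (v w : ℤ × ℤ) (p : ℤ × ℤ) : ℤ × ℤ := (v.1 + w.1 - 1 - p.1, v.2 + w.2 - 1 - p.2)

lemma er_er (v w p : ℤ × ℤ) : er v w (er v w p) = p := by
  simp [er]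

lemma Dd_reflect (v w p : ℤ × ℤ) : Dd v w (er v w p) = - Dd v w p := by
  unfold Dd er; push_cast; ring

lemma edge_box_down (v w : ℤ × ℤ) (hvw : w.2 < v.2) (hD : ∀ p : ℤ × ℤ, Dd v w p ≠ 0) :
    ∃ F : Finset (ℤ × ℤ), (∀ p ∉ F, tau v w p = 0) ∧
      2 * ∑ p ∈ F, tau v w p = (v.1 + w.1) * (w.2 - v.2) := by
  set a : ℤ := (v.1.natAbs : ℤ) with ha
  set b : ℤ := (w.1.natAbs : ℤ) with hb
  set R : ℤ := 2 * (a + b) + 1 with hRdef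
  have hav : -a ≤ v.1 ∧ v.1 ≤ a := by constructor <;> omega
  have hbw : -b ≤ w.1 ∧ w.1 ≤ b := by constructor <;> omega
  have hann : 0 ≤ a := by omega
  have hbnn : 0 ≤ b := by omega
  set M : ℤ := v.1 + w.1 - R with hMdef
  have hM0 : M ≤ 0 := by omega
  have hMR : M ≤ R := by omega
  have hsR : v.1 + w.1 ≤ R := by omega
  have hMs : M ≤ v.1 + w.1 := by omega
  -- real-cast basic facts
  have hΔ : (1:ℝ) ≤ (v.2:ℝ) - (w.2:ℝ) := by
    have : w.2 + 1 ≤ v.2 := hvw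
    have h' : ((w.2 + 1 : ℤ):ℝ) ≤ ((v.2:ℤ):ℝ) := by exact_mod_cast this
    push_cast at h'; linarith
  have hv1 : -(a:ℝ) ≤ (v.1:ℝ) := by exact_mod_cast hav.1
  have hv2 : (v.1:ℝ) ≤ (a:ℝ) := by exact_mod_cast hav.2
  have hw1 : -(b:ℝ) ≤ (w.1:ℝ) := by exact_mod_cast hbw.1
  have hw2 : (w.1:ℝ) ≤ (b:ℝ) := by exact_mod_cast hbw.2
  have hann' : (0:ℝ) ≤ (a:ℝ) := by exact_mod_cast hann
  have hbnn' : (0:ℝ) ≤ (b:ℝ) := by exact_mod_cast hbnn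
  have Dpos : ∀ m n : ℤ, w.2 ≤ n → n < v.2 → R ≤ m → 0 < Dd v w (m, n) := by
    intro m n hn1 hn2 hm
    have hy1 : (w.2:ℝ) ≤ (n:ℝ) := by exact_mod_cast hn1
    have hy2 : (n:ℝ) + 1 ≤ (v.2:ℝ) := by exact_mod_cast hn2
    have hx : 2*((a:ℝ) + (b:ℝ)) + 1 ≤ (m:ℝ) := by exact_mod_cast hm
    have e1 : (0:ℝ) ≤ ((a:ℝ) - v.1) * ((n:ℝ) + 1/2 - w.2) := by
      apply mul_nonneg <;> linarith
    have e2 : (0:ℝ) ≤ ((b:ℝ) + w.1) * ((v.2:ℝ) - ((n:ℝ) + 1/2)) := by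
      apply mul_nonneg <;> linarith
    have e3 : (0:ℝ) ≤ (((m:ℝ) + 1/2) - ((a:ℝ)+(b:ℝ))) * (((v.2:ℝ) - w.2) - 1) := by
      apply mul_nonneg <;> linarith
    unfold Dd
    simp only
    nlinarith [mul_nonneg hann' (by linarith : (0:ℝ) ≤ (n:ℝ) + 1/2 - w.2),
      mul_nonneg hbnn' (by linarith : (0:ℝ) ≤ (v.2:ℝ) - ((n:ℝ)+1/2))]
  have Dneg : ∀ m n : ℤ, w.2 ≤ n → n < v.2 → m < M → Dd v w (m, n) < 0 := by
    intro m n hn1 hn2 hm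
    have hy1 : (w.2:ℝ) ≤ (n:ℝ) := by exact_mod_cast hn1
    have hy2 : (n:ℝ) + 1 ≤ (v.2:ℝ) := by exact_mod_cast hn2
    have hm' : m + 1 ≤ M := hm
    have hx : (m:ℝ) + 1 ≤ (v.1:ℝ) + w.1 - (2*((a:ℝ)+(b:ℝ)) + 1) := by
      have h' : ((m + 1 : ℤ):ℝ) ≤ ((M:ℤ):ℝ) := by exact_mod_cast hm'
      have hRr : ((M:ℤ):ℝ) = (v.1:ℝ) + w.1 - (2*((a:ℝ)+(b:ℝ)) + 1) := by
        rw [hMdef, hRdef]; push_cast; ring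
      rw [hRr] at h'
      push_cast at h'
      linarith
    have e1 : (0:ℝ) ≤ ((a:ℝ) + v.1) * ((n:ℝ) + 1/2 - w.2) := by
      apply mul_nonneg <;> linarith
    have e2 : (0:ℝ) ≤ ((b:ℝ) - w.1) * ((v.2:ℝ) - ((n:ℝ) + 1/2)) := by
      apply mul_nonneg <;> linarith
    have e3 : (0:ℝ) ≤ (-(((m:ℝ) + 1/2)) - ((a:ℝ)+(b:ℝ))) * (((v.2:ℝ) - w.2) - 1) := by
      apply mul_nonneg <;> linarith
    unfold Dd
    simp only
    nlinarith [mul_nonneg hann' (by linarith : (0:ℝ) ≤ (n:ℝ) + 1/2 - w.2),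
      mul_nonneg hbnn' (by linarith : (0:ℝ) ≤ (v.2:ℝ) - ((n:ℝ)+1/2))]
  refine ⟨(Finset.Ico M R) ×ˢ (Finset.Ico w.2 v.2), ?_, ?_⟩
  · intro p hp
    by_cases hrow : w.2 ≤ p.2 ∧ p.2 < v.2
    · have hcol : p.1 < M ∨ R ≤ p.1 := by
        simp only [Finset.mem_product, Finset.mem_Ico] at hp
        omega
      rw [tau_strip_down v w p hrow.1 hrow.2 (hD p)]
      rcases hcol with hcol | hcol
      · have hDn : Dd v w p < 0 := Dneg p.1 p.2 hrow.1 hrow.2 hcol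
        rw [if_neg (by linarith), if_neg (by omega)]
        norm_num
      · have hDp : 0 < Dd v w p := Dpos p.1 p.2 hrow.1 hrow.2 hcol
        rw [if_pos hDp, if_pos (by omega)]
        norm_num
    · exact tau_row_zero v w p (by omega)
  · -- the sum over the box
    set F := (Finset.Ico M R) ×ˢ (Finset.Ico w.2 v.2) with hF
    have hmem : ∀ p ∈ F, er v w p ∈ F := by
      intro p hp
      simp only [hF, Finset.mem_product, Finset.mem_Ico, er] at hp ⊢
      omega
    have hre : ∑ p ∈ F, tau v w (er v w p) = ∑ p ∈ F, tau v w p := by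
      apply Finset.sum_nbij' (fun p => er v w p) (fun p => er v w p)
      · intro p hp; exact hmem p hp
      · intro p hp; exact hmem p hp
      · intro p _; exact er_er v w p
      · intro p _; exact er_er v w p
      · intro p _; rfl
    have hpoint : ∀ p ∈ F, tau v w p + tau v w (er v w p)
        = 1 - (if 0 ≤ p.1 then 1 else 0) - (if p.1 < v.1 + w.1 then 1 else 0) := by
      intro p hp
      simp only [hF, Finset.mem_product, Finset.mem_Ico] at hp
      have hrow : w.2 ≤ p.2 ∧ p.2 < v.2 := hp.2
      have hrow' : w.2 ≤ (er v w p).2 ∧ (er v w p).2 < v.2 := by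
        simp only [er]; omega
      rw [tau_strip_down v w p hrow.1 hrow.2 (hD p),
        tau_strip_down v w _ hrow'.1 hrow'.2 (hD _)]
      have hDr : Dd v w (er v w p) = - Dd v w p := Dd_reflect v w p
      have hcol : (er v w p).1 = v.1 + w.1 - 1 - p.1 := rfl
      simp only [hDr, hcol]
      rcases lt_or_gt_of_ne (hD p) with hsgn | hsgn <;> split_ifs <;> first | omega | linarith
    have h2sum : 2 * ∑ p ∈ F, tau v w p
        = ∑ p ∈ F, (1 - (if 0 ≤ p.1 then 1 else 0) - (if p.1 < v.1 + w.1 then 1 else 0)) := by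
      rw [← Finset.sum_congr rfl hpoint, Finset.sum_add_distrib, hre]
      ring
    rw [h2sum, hF, Finset.sum_product]
    have hinner : ∀ m : ℤ, ∑ _n ∈ Finset.Ico w.2 v.2,
        ((1:ℤ) - (if 0 ≤ m then 1 else 0) - (if m < v.1 + w.1 then 1 else 0))
        = (v.2 - w.2) * ((1:ℤ) - (if 0 ≤ m then 1 else 0) - (if m < v.1 + w.1 then 1 else 0)) := by
      intro m
      rw [Finset.sum_const, Int.card_Ico, nsmul_eq_mul]
      congr 1
      omega
    rw [Finset.sum_congr rfl (fun m _ => hinner m), ← Finset.mul_sum]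
    have hsum1 : ∑ m ∈ Finset.Ico M R, (1:ℤ) = R - M := by
      rw [Finset.sum_const, Int.card_Ico, nsmul_eq_mul, mul_one]
      omega
    have hsum2 : ∑ m ∈ Finset.Ico M R, (if 0 ≤ m then (1:ℤ) else 0) = R := by
      rw [← Finset.sum_filter]
      have hf : (Finset.Ico M R).filter (fun m => 0 ≤ m) = Finset.Ico 0 R := by
        ext x
        simp only [Finset.mem_filter, Finset.mem_Ico]
        omega
      rw [hf, Finset.sum_const, Int.card_Ico, nsmul_eq_mul, mul_one]
      omega
    have hsum3 : ∑ m ∈ Finset.Ico M R, (if m < v.1 + w.1 then (1:ℤ) else 0)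
        = v.1 + w.1 - M := by
      rw [← Finset.sum_filter]
      have hf : (Finset.Ico M R).filter (fun m => m < v.1 + w.1)
          = Finset.Ico M (v.1 + w.1) := by
        ext x
        simp only [Finset.mem_filter, Finset.mem_Ico]
        omega
      rw [hf, Finset.sum_const, Int.card_Ico, nsmul_eq_mul, mul_one]
      omega
    have hsplit : ∑ m ∈ Finset.Ico M R,
        ((1:ℤ) - (if 0 ≤ m then 1 else 0) - (if m < v.1 + w.1 then 1 else 0))
        = (R - M) - R - (v.1 + w.1 - M) := by
      rw [Finset.sum_sub_distrib, Finset.sum_sub_distrib, hsum1, hsum2, hsum3]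
    rw [hsplit]
    ring



lemma Dd_ne_of_ratio (v w p : ℤ × ℤ) (h : (Ae w p / Ae v p).im ≠ 0) : Dd v w p ≠ 0 := by
  intro h0
  apply h
  rw [ratio_im, h0, zero_div]

lemma edge_box (v w : ℤ × ℤ) (hiD : ∀ p : ℤ × ℤ, (Ae w p / Ae v p).im ≠ 0) :
    ∃ F : Finset (ℤ × ℤ), (∀ p ∉ F, tau v w p = 0) ∧
      2 * ∑ p ∈ F, tau v w p = (v.1 + w.1) * (w.2 - v.2) := by
  have hDd : ∀ p, Dd v w p ≠ 0 := fun p => Dd_ne_of_ratio v w p (hiD p)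
  rcases lt_trichotomy v.2 w.2 with hlt | heq | hgt
  · obtain ⟨F, hsupp, hval⟩ := edge_box_down w v hlt
      (fun p => by rw [Dd_swap]; exact neg_ne_zero.2 (hDd p))
    refine ⟨F, ?_, ?_⟩
    · intro p hp
      have h1 := hsupp p hp
      have h2 := tau_swap v w p (hiD p)
      omega
    · have hnegs : ∑ p ∈ F, tau v w p = - ∑ p ∈ F, tau w v p := by
        rw [← Finset.sum_neg_distrib]
        apply Finset.sum_congr rfl
        intro p _
        have := tau_swap v w p (hiD p)
        omega
      rw [hnegs]
      linear_combination (-1 : ℤ) * hval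
  · refine ⟨∅, ?_, ?_⟩
    · intro p _
      exact tau_row_zero v w p (by omega)
    · rw [Finset.sum_empty, heq]
      ring
  · exact edge_box_down v w hgt hDd

/-! ### decay bound for the angles -/

lemma arg_div_bound (A B : ℂ) (hA : A ≠ 0) :
    |(B / A).arg| ≤ 2 * Real.pi * ‖B - A‖ / ‖A‖ := by
  have haA : 0 < ‖A‖ := norm_pos_iff.mpr hA
  have hπ := Real.pi_pos
  by_cases hcase : ‖A‖ ≤ 2 * ‖B - A‖
  · refine le_trans (Complex.abs_arg_le_pi _) ?_
    rw [le_div_iff₀ haA]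
    nlinarith [norm_nonneg (B - A)]
  · push_neg at hcase
    set z := B / A with hz
    have hz1 : z - 1 = (B - A) / A := by
      rw [hz, sub_div, div_self hA]
    have habs1 : ‖z - 1‖ = ‖B - A‖ / ‖A‖ := by
      rw [hz1, norm_div]
    have hlt : ‖z - 1‖ < 1/2 := by
      rw [habs1, div_lt_iff₀ haA]
      linarith
    have hre1 : |z.re - 1| ≤ ‖z - 1‖ := by
      have := Complex.abs_re_le_norm (z - 1)
      simpa using this
    have hre : 0 < z.re := by
      have := abs_lt.1 (lt_of_le_of_lt hre1 hlt)
      linarith [this.1]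
    have him : |z.im| ≤ ‖z - 1‖ := by
      have := Complex.abs_im_le_norm (z - 1)
      simpa using this
    have harg2 : |z.arg| ≤ Real.pi / 2 := Complex.abs_arg_le_pi_div_two_iff.2 hre.le
    have hzre : z.re ≤ ‖z‖ := Complex.re_le_norm z
    have hzabs : 1/2 ≤ ‖z‖ := by
      have := abs_lt.1 (lt_of_le_of_lt hre1 hlt)
      linarith [this.1]
    have hsin : 2 / Real.pi * |z.arg| ≤ |Real.sin z.arg| := by
      rcases le_or_gt 0 z.arg with h0 | h0
      · rw [_root_.abs_of_nonneg h0]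
        exact le_trans (Real.mul_le_sin h0 (by rw [_root_.abs_of_nonneg h0] at harg2; exact harg2))
          (le_abs_self _)
      · rw [abs_of_neg h0]
        have h1 : 0 ≤ -z.arg := by linarith
        have h2 : -z.arg ≤ Real.pi / 2 := by rw [abs_of_neg h0] at harg2; exact harg2
        calc 2 / Real.pi * (-z.arg) ≤ Real.sin (-z.arg) := Real.mul_le_sin h1 h2
        _ = -Real.sin z.arg := Real.sin_neg _
        _ ≤ |Real.sin z.arg| := neg_le_abs _
    have hsinval : |Real.sin z.arg| = |z.im| / ‖z‖ := by
      rw [Complex.sin_arg, abs_div, _root_.abs_of_nonneg (norm_nonneg z)]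
    have hfin : |z.arg| ≤ Real.pi * ‖z - 1‖ := by
      have hzpos : (0:ℝ) < ‖z‖ := by linarith
      have h3 : |z.im| / ‖z‖ ≤ 2 * ‖z - 1‖ := by
        rw [div_le_iff₀ hzpos]
        nlinarith [abs_nonneg z.im]
      have h4 : 2 / Real.pi * |z.arg| ≤ 2 * ‖z - 1‖ := by
        rw [hsinval] at hsin
        linarith
      have h5 := mul_le_mul_of_nonneg_left h4 (by positivity : (0:ℝ) ≤ Real.pi / 2)
      have h6 : Real.pi / 2 * (2 / Real.pi * |z.arg|) = |z.arg| := by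
        field_simp
      rw [h6] at h5
      linarith
    rw [habs1] at hfin
    calc |(B/A).arg| = |z.arg| := rfl
    _ ≤ Real.pi * (‖B - A‖ / ‖A‖) := hfin
    _ ≤ 2 * Real.pi * ‖B - A‖ / ‖A‖ := by
      rw [mul_div_assoc]
      apply mul_le_mul_of_nonneg_right (by linarith) (by positivity)


def NN (p : ℤ × ℤ) : ℕ := max p.1.natAbs p.2.natAbs

lemma Ae_sub (v w p : ℤ × ℤ) : Ae w p - Ae v p = vx w - vx v := by
  unfold Ae; ring

lemma Ae_lower (v p : ℤ × ℤ) :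
    ((NN p : ℝ)) ≤ ‖Ae v p‖ + ((v.1.natAbs : ℝ) + (v.2.natAbs : ℝ) + 1) := by
  have hre : |(Ae v p).re| ≤ ‖Ae v p‖ := Complex.abs_re_le_norm _
  have him : |(Ae v p).im| ≤ ‖Ae v p‖ := Complex.abs_im_le_norm _
  have c1 : ((p.1.natAbs : ℝ)) = |(p.1 : ℝ)| := by
    rw [Nat.cast_natAbs, Int.cast_abs]
  have c2 : ((p.2.natAbs : ℝ)) = |(p.2 : ℝ)| := by
    rw [Nat.cast_natAbs, Int.cast_abs]
  have c3 : ((v.1.natAbs : ℝ)) = |(v.1 : ℝ)| := by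
    rw [Nat.cast_natAbs, Int.cast_abs]
  have c4 : ((v.2.natAbs : ℝ)) = |(v.2 : ℝ)| := by
    rw [Nat.cast_natAbs, Int.cast_abs]
  have h1 : |(p.1:ℝ)| ≤ |(Ae v p).re| + |(v.1:ℝ)| + 1 := by
    rw [Ae_re]
    have := abs_add_le ((v.1:ℝ) - ((p.1:ℝ) + 1/2)) ((p.1:ℝ) + 1/2 - v.1 + (p.1:ℝ))
    have h2 := abs_add_le ((p.1:ℝ)) (1/2 : ℝ)
    have h3 := abs_sub_abs_le_abs_sub ((p.1:ℝ) + 1/2) ((v.1:ℝ))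
    have h4 : |(p.1:ℝ) + 1/2 - v.1| = |(v.1:ℝ) - ((p.1:ℝ)+1/2)| := abs_sub_comm _ _
    have h5 : |(p.1:ℝ)| - |(1/2:ℝ)| ≤ |(p.1:ℝ) + 1/2| := by
      have := abs_sub_abs_le_abs_sub ((p.1:ℝ)) (-(1/2:ℝ))
      simpa [sub_neg_eq_add] using this
    rw [h4] at h3
    simp only [abs_of_pos (by norm_num : (0:ℝ) < 1/2)] at h5
    linarith
  have h1' : |(p.2:ℝ)| ≤ |(Ae v p).im| + |(v.2:ℝ)| + 1 := by
    rw [Ae_im]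
    have h3 := abs_sub_abs_le_abs_sub ((p.2:ℝ) + 1/2) ((v.2:ℝ))
    have h4 : |(p.2:ℝ) + 1/2 - v.2| = |(v.2:ℝ) - ((p.2:ℝ)+1/2)| := abs_sub_comm _ _
    have h5 : |(p.2:ℝ)| - |(1/2:ℝ)| ≤ |(p.2:ℝ) + 1/2| := by
      have := abs_sub_abs_le_abs_sub ((p.2:ℝ)) (-(1/2:ℝ))
      simpa [sub_neg_eq_add] using this
    rw [h4] at h3
    simp only [abs_of_pos (by norm_num : (0:ℝ) < 1/2)] at h5
    linarith
  have hnn : (NN p : ℝ) = max ((p.1.natAbs : ℝ)) ((p.2.natAbs : ℝ)) := by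
    rw [NN]
    push_cast [Nat.cast_max]
    rfl
  rw [hnn]
  rcases max_cases ((p.1.natAbs : ℝ)) ((p.2.natAbs : ℝ)) with ⟨hm, _⟩ | ⟨hm, _⟩ <;> rw [hm]
  · rw [c1]
    have hv : (0:ℝ) ≤ (v.2.natAbs : ℝ) := by positivity
    rw [c3] at *
    linarith
  · rw [c2]
    have hv : (0:ℝ) ≤ (v.1.natAbs : ℝ) := by positivity
    rw [c4] at *
    linarith

lemma summable_base : Summable (fun p : ℤ × ℤ => ((NN p : ℝ) + 1)⁻¹ ^ 3) := by
  have hE := EisensteinSeries.summable_one_div_norm_rpow (by norm_num : (2:ℝ) < 3)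
  have h2 : Summable (fun p : ℤ × ℤ => ‖(finTwoArrowEquiv ℤ).symm p‖ ^ (-(3:ℝ))) :=
    (finTwoArrowEquiv ℤ).symm.summable_iff.mpr hE
  apply Summable.of_norm_bounded_eventually h2
  have hsub : {p : ℤ × ℤ | ¬ ‖((NN p : ℝ) + 1)⁻¹ ^ 3‖ ≤ ‖(finTwoArrowEquiv ℤ).symm p‖ ^ (-(3:ℝ))}
      ⊆ {(0,0)} := by
    intro p hp
    simp only [Set.mem_setOf_eq] at hp
    by_contra hne
    apply hp
    have hnorm : ‖(finTwoArrowEquiv ℤ).symm p‖ = (NN p : ℝ) := by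
      rw [show (finTwoArrowEquiv ℤ).symm p = ![p.1, p.2] from rfl,
        EisensteinSeries.norm_eq_max_natAbs]
      simp [NN]
    have hNpos : 1 ≤ NN p := by
      rcases p with ⟨p1, p2⟩
      simp only [Set.mem_singleton_iff, Prod.mk.injEq, not_and_or] at hne
      unfold NN
      simp only
      omega
    have hN1 : (1:ℝ) ≤ (NN p : ℝ) := by exact_mod_cast hNpos
    rw [hnorm, Real.rpow_neg (by linarith)]
    have h3 : ((NN p:ℝ)) ^ (3:ℝ) = ((NN p:ℝ))^(3:ℕ) := by
      rw [← Real.rpow_natCast ((NN p:ℝ)) 3]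
      norm_num
    rw [h3, Real.norm_eq_abs, _root_.abs_of_nonneg (by positivity), ← inv_pow]
    apply pow_le_pow_left₀ (by positivity)
    exact inv_anti₀ (by linarith) (by linarith)
  exact Set.Finite.subset (Set.finite_singleton _) hsub


lemma abs_arg_lt_pi (v w p : ℤ × ℤ) (h : (Ae w p / Ae v p).im ≠ 0) :
    |(Ae w p / Ae v p).arg| < Real.pi :=
  abs_lt.2 ⟨Complex.neg_pi_lt_arg _, arg_lt_pi_of_im_ne h⟩

lemma edge_decay (v w : ℤ × ℤ) : ∃ K : ℝ, 0 ≤ K ∧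
    ∀ p : ℤ × ℤ, |(Ae w p / Ae v p).arg| ≤ K * ((NN p : ℝ) + 1)⁻¹ := by
  set L : ℝ := ‖vx w - vx v‖ with hLdef
  set Cv : ℝ := (v.1.natAbs : ℝ) + (v.2.natAbs : ℝ) + 1 with hCvdef
  have hL : 0 ≤ L := norm_nonneg _
  have hCv : (1:ℝ) ≤ Cv := by
    have h1 : (0:ℝ) ≤ (v.1.natAbs:ℝ) := by positivity
    have h2 : (0:ℝ) ≤ (v.2.natAbs:ℝ) := by positivity
    rw [hCvdef]
    linarith
  have hπ := Real.pi_pos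
  refine ⟨8*Real.pi*L + Real.pi*(2*Cv+2), by positivity, ?_⟩
  intro p
  have hNN : (0:ℝ) ≤ (NN p : ℝ) := by positivity
  have hNN1 : (0:ℝ) < (NN p : ℝ) + 1 := by linarith
  have hinv : (0:ℝ) < ((NN p : ℝ) + 1)⁻¹ := by positivity
  have hlow := Ae_lower v p
  rw [← hCvdef] at hlow
  by_cases hbig : 2*Cv + 1 ≤ (NN p : ℝ)
  · have habs : ((NN p : ℝ) + 1)/4 ≤ ‖Ae v p‖ := by linarith
    have habspos : (0:ℝ) < ‖Ae v p‖ := by linarith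
    have h1 := arg_div_bound (Ae v p) (Ae w p) (Ae_ne v p)
    rw [Ae_sub, ← hLdef] at h1
    have h2 : 2 * Real.pi * L / ‖Ae v p‖
        ≤ 2 * Real.pi * L / (((NN p : ℝ) + 1)/4) := by
      apply div_le_div_of_nonneg_left (by positivity) (by linarith) habs
    have h3 : 2 * Real.pi * L / (((NN p : ℝ) + 1)/4)
        = 8 * Real.pi * L * ((NN p : ℝ) + 1)⁻¹ := by
      field_simp
      ring
    have h4 : (0:ℝ) ≤ Real.pi*(2*Cv+2) * ((NN p : ℝ) + 1)⁻¹ := by positivity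
    calc |(Ae w p / Ae v p).arg| ≤ 2 * Real.pi * L / ‖Ae v p‖ := h1
    _ ≤ 8 * Real.pi * L * ((NN p : ℝ) + 1)⁻¹ := by rw [← h3]; exact h2
    _ ≤ (8*Real.pi*L + Real.pi*(2*Cv+2)) * ((NN p : ℝ) + 1)⁻¹ := by
      rw [add_mul]; linarith
  · push_neg at hbig
    have hmul : ((NN p : ℝ) + 1) * ((NN p : ℝ) + 1)⁻¹ = 1 := mul_inv_cancel₀ (by linarith)
    have h5 : Real.pi ≤ Real.pi*(2*Cv+2) * ((NN p : ℝ) + 1)⁻¹ := by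
      have hq : (0:ℝ) ≤ Real.pi * ((2*Cv+2 - ((NN p:ℝ)+1)) * ((NN p:ℝ)+1)⁻¹) :=
        mul_nonneg hπ.le (mul_nonneg (by linarith) hinv.le)
      have hmulπ : Real.pi * (((NN p:ℝ)+1) * ((NN p:ℝ)+1)⁻¹) = Real.pi := by
        rw [hmul, mul_one]
      nlinarith [hq, hmulπ]
    have h6 : (0:ℝ) ≤ 8*Real.pi*L * ((NN p : ℝ) + 1)⁻¹ := by positivity
    calc |(Ae w p / Ae v p).arg| ≤ Real.pi := Complex.abs_arg_le_pi _
    _ ≤ (8*Real.pi*L + Real.pi*(2*Cv+2)) * ((NN p : ℝ) + 1)⁻¹ := by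
      rw [add_mul]; linarith

lemma summable_h (v w : ℤ × ℤ) (f : ℝ → ℝ) (C : ℝ)
    (hf : ∀ t : ℝ, |t| < Real.pi → |f t| ≤ C * |t| ^ 3)
    (hiD : ∀ p : ℤ × ℤ, (Ae w p / Ae v p).im ≠ 0) :
    Summable (fun p : ℤ × ℤ => f ((Ae w p / Ae v p).arg)) := by
  obtain ⟨K, hK0, hK⟩ := edge_decay v w
  have hC : 0 ≤ C := by
    have h1 := hf 1 (by rw [abs_one]; linarith [Real.pi_gt_three])
    norm_num at h1
    linarith [abs_nonneg (f 1)]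
  apply Summable.of_norm_bounded (g := fun p => (C * K ^ 3) * ((NN p : ℝ) + 1)⁻¹ ^ 3)
    ((summable_base).mul_left _)
  intro p
  have hlt := abs_arg_lt_pi v w p (hiD p)
  have h1 := hf _ hlt
  have h2 : |(Ae w p / Ae v p).arg| ^ 3 ≤ (K * ((NN p : ℝ) + 1)⁻¹) ^ 3 :=
    pow_le_pow_left₀ (abs_nonneg _) (hK p) 3
  calc ‖f ((Ae w p / Ae v p).arg)‖ = |f ((Ae w p / Ae v p).arg)| := rfl
  _ ≤ C * |(Ae w p / Ae v p).arg| ^ 3 := h1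
  _ ≤ C * (K * ((NN p : ℝ) + 1)⁻¹) ^ 3 := by
    apply mul_le_mul_of_nonneg_left h2 hC
  _ = (C * K ^ 3) * ((NN p : ℝ) + 1)⁻¹ ^ 3 := by ring

lemma tsum_h_zero (v w : ℤ × ℤ) (f : ℝ → ℝ)
    (hodd : ∀ t : ℝ, |t| < Real.pi → f (-t) = -f t)
    (hiD : ∀ p : ℤ × ℤ, (Ae w p / Ae v p).im ≠ 0) :
    ∑' p : ℤ × ℤ, f ((Ae w p / Ae v p).arg) = 0 := by
  have hinv : Function.Involutive (er v w) := fun p => er_er v w p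
  let e : Equiv.Perm (ℤ × ℤ) := hinv.toPerm
  have hratio : ∀ p, Ae w (er v w p) / Ae v (er v w p) = (Ae w p / Ae v p)⁻¹ := by
    intro p
    have h1 : Ae w (er v w p) = -(Ae v p) := by
      unfold Ae er vx pt
      apply Complex.ext <;> simp <;> push_cast <;> ring
    have h2 : Ae v (er v w p) = -(Ae w p) := by
      unfold Ae er vx pt
      apply Complex.ext <;> simp <;> push_cast <;> ring
    rw [h1, h2, neg_div_neg_eq, ← inv_div]
  have harg : ∀ p, (Ae w (er v w p) / Ae v (er v w p)).arg = - (Ae w p / Ae v p).arg := by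
    intro p
    rw [hratio p, Complex.arg_inv, if_neg]
    intro hpi
    exact hiD p ((Complex.arg_eq_pi_iff.1 hpi).2)
  have key : ∀ p, f ((Ae w (er v w p) / Ae v (er v w p)).arg)
      = - f ((Ae w p / Ae v p).arg) := by
    intro p
    rw [harg p, hodd _ (abs_arg_lt_pi v w p (hiD p))]
  have h1 := e.tsum_eq (fun p : ℤ × ℤ => f ((Ae w p / Ae v p).arg))
  have h2 : ∀ p : ℤ × ℤ, e p = er v w p := fun p => rfl
  have h3 : ∑' p, f ((Ae w (e p) / Ae v (e p)).arg)
      = ∑' (p : ℤ × ℤ), - f ((Ae w p / Ae v p).arg) := by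
    apply tsum_congr
    intro p
    rw [h2 p, key p]
  rw [h3, tsum_neg] at h1
  linarith


lemma pointwise_value (u : Fin 3 → ℤ × ℤ) (g : ℝ → ℝ) (p : ℤ × ℤ)
    (him : ∀ i j : Fin 3, i ≠ j → ((Ae (u i) p) / (Ae (u j) p)).im ≠ 0) :
    ∑ i : Fin 3, g ((Ae (u (i + 2)) p / Ae (u (i + 1)) p).arg)
      = 2 * Real.pi *
          ((tau (u 1) (u 2) p + tau (u 2) (u 0) p + tau (u 0) (u 1) p : ℤ) : ℝ)
        + ((g ((Ae (u 2) p / Ae (u 1) p).arg) - (Ae (u 2) p / Ae (u 1) p).arg)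
          + (g ((Ae (u 0) p / Ae (u 2) p).arg) - (Ae (u 0) p / Ae (u 2) p).arg)
          + (g ((Ae (u 1) p / Ae (u 0) p).arg) - (Ae (u 1) p / Ae (u 0) p).arg)) := by
  have hsum := sum_arg_eq u p him
  rw [Fin.sum_univ_three] at hsum ⊢
  simp only [show ((0:Fin 3)+2) = 2 from rfl, show ((0:Fin 3)+1) = 1 from rfl,
    show ((1:Fin 3)+2) = 0 from rfl, show ((1:Fin 3)+1) = 2 from rfl,
    show ((2:Fin 3)+2) = 1 from rfl, show ((2:Fin 3)+1) = 0 from rfl] at hsum ⊢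
  linarith

end Connes15

open Connes15

/-- Connes' area formula, lattice version. `c` embeds `ℤ²` in `ℂ`, and `a` embeds the dual
lattice `ℤ² + (1/2, 1/2)` in `ℂ`. -/
theorem stmt15 (u : Fin 3 → ℤ × ℤ) (g : ℝ → ℝ)
    (hodd : ∀ α : ℝ, |α| < Real.pi → g (-α) = -g α)
    (hbdd : ∃ C, ∀ α : ℝ, |α| < Real.pi → |g α| ≤ C)
    (happrox : ∃ C, ∀ α : ℝ, |α| < Real.pi → |g α - α| ≤ C * |α| ^ 3)
    (c : ℤ × ℤ → ℂ) (hc : ∀ p : ℤ × ℤ, c p = (p.1 : ℂ) + (p.2 : ℂ) * Complex.I)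
    (a : ℤ × ℤ → ℂ)
    (ha : ∀ p : ℤ × ℤ, a p = (((p.1 : ℝ) + 1 / 2 : ℝ) : ℂ) + (((p.2 : ℝ) + 1 / 2 : ℝ) : ℂ) * Complex.I)
    (hgen : ∀ p : ℤ × ℤ, ∀ i j : Fin 3, i ≠ j → ((c (u i) - a p) / (c (u j) - a p)).im ≠ 0) :
    ∑' p : ℤ × ℤ, ∑ i : Fin 3,
        g (Complex.arg ((c (u (i + 2)) - a p) / (c (u (i + 1)) - a p))) =
      2 * Real.pi *
        ((((u 1).1 - (u 0).1 : ℤ) : ℝ) * (((u 2).2 - (u 0).2 : ℤ) : ℝ) -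
          (((u 1).2 - (u 0).2 : ℤ) : ℝ) * (((u 2).1 - (u 0).1 : ℤ) : ℝ)) / 2 := by
  have hceq : c = vx := funext fun v => by rw [hc v]; rfl
  have haeq : a = pt := funext fun p => by rw [ha p]; rfl
  subst hceq haeq
  -- reinterpret hgen
  have him : ∀ p : ℤ × ℤ, ∀ i j : Fin 3, i ≠ j → ((Ae (u i) p) / (Ae (u j) p)).im ≠ 0 :=
    hgen
  obtain ⟨C, hC⟩ := happrox
  set hfun : ℝ → ℝ := fun t => g t - t with hfdef
  have hf : ∀ t : ℝ, |t| < Real.pi → |hfun t| ≤ C * |t| ^ 3 := hC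
  have hfodd : ∀ t : ℝ, |t| < Real.pi → hfun (-t) = - hfun t := by
    intro t ht
    simp only [hfdef]
    rw [hodd t ht]
    ring
  have him12 : ∀ p, (Ae (u 2) p / Ae (u 1) p).im ≠ 0 := fun p => him p 2 1 (by decide)
  have him20 : ∀ p, (Ae (u 0) p / Ae (u 2) p).im ≠ 0 := fun p => him p 0 2 (by decide)
  have him01 : ∀ p, (Ae (u 1) p / Ae (u 0) p).im ≠ 0 := fun p => him p 1 0 (by decide)
  -- summability of the three odd correction terms
  have S1 : Summable (fun p : ℤ × ℤ => hfun ((Ae (u 2) p / Ae (u 1) p).arg)) :=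
    summable_h (u 1) (u 2) hfun C hf him12
  have S2 : Summable (fun p : ℤ × ℤ => hfun ((Ae (u 0) p / Ae (u 2) p).arg)) :=
    summable_h (u 2) (u 0) hfun C hf him20
  have S3 : Summable (fun p : ℤ × ℤ => hfun ((Ae (u 1) p / Ae (u 0) p).arg)) :=
    summable_h (u 0) (u 1) hfun C hf him01
  -- the boxes
  obtain ⟨F1, hF1z, hF1v⟩ := edge_box (u 1) (u 2) him12
  obtain ⟨F2, hF2z, hF2v⟩ := edge_box (u 2) (u 0) him20
  obtain ⟨F3, hF3z, hF3v⟩ := edge_box (u 0) (u 1) him01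
  set t1 : ℤ × ℤ → ℝ := fun p => ((tau (u 1) (u 2) p : ℤ) : ℝ) with ht1
  set t2 : ℤ × ℤ → ℝ := fun p => ((tau (u 2) (u 0) p : ℤ) : ℝ) with ht2
  set t3 : ℤ × ℤ → ℝ := fun p => ((tau (u 0) (u 1) p : ℤ) : ℝ) with ht3
  have sT1 : Summable t1 := summable_of_ne_finset_zero
    (s := F1) (fun p hp => by simp [ht1, hF1z p hp])
  have sT2 : Summable t2 := summable_of_ne_finset_zero
    (s := F2) (fun p hp => by simp [ht2, hF2z p hp])
  have sT3 : Summable t3 := summable_of_ne_finset_zero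
    (s := F3) (fun p hp => by simp [ht3, hF3z p hp])
  have vT1 : ∑' p, t1 p = ((∑ p ∈ F1, tau (u 1) (u 2) p : ℤ) : ℝ) := by
    rw [tsum_eq_sum (s := F1) (fun p hp => by simp [ht1, hF1z p hp])]
    push_cast
    rfl
  have vT2 : ∑' p, t2 p = ((∑ p ∈ F2, tau (u 2) (u 0) p : ℤ) : ℝ) := by
    rw [tsum_eq_sum (s := F2) (fun p hp => by simp [ht2, hF2z p hp])]
    push_cast
    rfl
  have vT3 : ∑' p, t3 p = ((∑ p ∈ F3, tau (u 0) (u 1) p : ℤ) : ℝ) := by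
    rw [tsum_eq_sum (s := F3) (fun p hp => by simp [ht3, hF3z p hp])]
    push_cast
    rfl
  -- rewrite the summand pointwise
  have hpt : ∀ p : ℤ × ℤ,
      (∑ i : Fin 3, g (Complex.arg ((vx (u (i + 2)) - pt p) / (vx (u (i + 1)) - pt p))))
      = (2 * Real.pi * (t1 p + t2 p + t3 p))
        + ((hfun ((Ae (u 2) p / Ae (u 1) p).arg) + hfun ((Ae (u 0) p / Ae (u 2) p).arg))
          + hfun ((Ae (u 1) p / Ae (u 0) p).arg)) := by
    intro p
    have := pointwise_value u g p (him p)
    simp only [ht1, ht2, ht3, hfdef,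
      show ∀ (v q : ℤ × ℤ), vx v - pt q = Ae v q from fun _ _ => rfl]
    push_cast at this ⊢
    linarith
  rw [tsum_congr hpt]
  have hsum1 : Summable (fun p : ℤ × ℤ => 2 * Real.pi * (t1 p + t2 p + t3 p)) :=
    (((sT1.add sT2).add sT3).mul_left _)
  have hsum2 : Summable (fun p : ℤ × ℤ =>
      (hfun ((Ae (u 2) p / Ae (u 1) p).arg) + hfun ((Ae (u 0) p / Ae (u 2) p).arg))
        + hfun ((Ae (u 1) p / Ae (u 0) p).arg)) := (S1.add S2).add S3
  rw [Summable.tsum_add hsum1 hsum2, Summable.tsum_add (S1.add S2) S3, Summable.tsum_add S1 S2,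
    tsum_h_zero (u 1) (u 2) hfun hfodd him12,
    tsum_h_zero (u 2) (u 0) hfun hfodd him20,
    tsum_h_zero (u 0) (u 1) hfun hfodd him01, tsum_mul_left,
    Summable.tsum_add (sT1.add sT2) sT3, Summable.tsum_add sT1 sT2, vT1, vT2, vT3]
  -- final arithmetic
  have e1 : ((2 * ∑ p ∈ F1, tau (u 1) (u 2) p : ℤ) : ℝ)
      = (((u 1).1 + (u 2).1 : ℤ) : ℝ) * (((u 2).2 - (u 1).2 : ℤ) : ℝ) := by
    exact_mod_cast congrArg (fun z : ℤ => (z : ℝ)) hF1v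
  have e2 : ((2 * ∑ p ∈ F2, tau (u 2) (u 0) p : ℤ) : ℝ)
      = (((u 2).1 + (u 0).1 : ℤ) : ℝ) * (((u 0).2 - (u 2).2 : ℤ) : ℝ) := by
    exact_mod_cast congrArg (fun z : ℤ => (z : ℝ)) hF2v
  have e3 : ((2 * ∑ p ∈ F3, tau (u 0) (u 1) p : ℤ) : ℝ)
      = (((u 0).1 + (u 1).1 : ℤ) : ℝ) * (((u 1).2 - (u 0).2 : ℤ) : ℝ) := by
    exact_mod_cast congrArg (fun z : ℤ => (z : ℝ)) hF3v
  push_cast at e1 e2 e3 ⊢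
  linear_combination Real.pi * e1 + Real.pi * e2 + Real.pi * e3
end
end

section
/- Let H be a bounded self-adjoint operator on a Hilbert space, η > 0, B a bounded operator with ‖B‖ ≤ η/2, and H_f = H + B. Then (H_f* − iη)(H_f + iη) ≥ (1/2)(H² + η²/2) as quadratic forms. -/
/-!
Writing `u = A ψ + iη ψ`, self-adjointness of `A` makes the cross term vanish, so
`‖u‖² = ‖A ψ‖² + η² ‖ψ‖²`. The vector form of the operator inequality
`(H_f* − iη)(H_f + iη) ≥ ½ (H − iη)(H + iη) − B*B` is `‖u + B ψ‖² ≥ ½ ‖u‖² − ‖B ψ‖²`,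
and `‖B ψ‖² ≤ η²/4 ‖ψ‖²` then leaves `½ ‖A ψ‖² + η²/4 ‖ψ‖²`.
-/

open Complex

theorem half_norm_sq_sub_norm_sq_le_norm_add_sq {E : Type*} [SeminormedAddCommGroup E]
    (u v : E) : ‖u‖ ^ 2 / 2 - ‖v‖ ^ 2 ≤ ‖u + v‖ ^ 2 := by
  have h : ‖u‖ ≤ ‖u + v‖ + ‖v‖ := by simpa using norm_sub_le (u + v) v
  nlinarith [norm_nonneg u, sq_nonneg (‖u + v‖ - ‖v‖)]

theorem LinearMap.IsSymmetric.norm_apply_add_real_mul_I_smul_sq {E : Type*}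
    [SeminormedAddCommGroup E] [InnerProductSpace ℂ E] {T : E →ₗ[ℂ] E} (hT : T.IsSymmetric)
    (t : ℝ) (x : E) : ‖T x + ((t : ℂ) * I) • x‖ ^ 2 = ‖T x‖ ^ 2 + t ^ 2 * ‖x‖ ^ 2 := by
  have hcross : RCLike.re (inner ℂ (T x) (((t : ℂ) * I) • x)) = 0 := by
    rw [inner_smul_right]
    simp [hT.im_inner_apply_self x]
  rw [@norm_add_sq ℂ, hcross, norm_smul]
  simp [mul_pow]

theorem stmt19_general {H : Type*} [NormedAddCommGroup H] [InnerProductSpace ℂ H] [CompleteSpace H]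
    (A B : H →L[ℂ] H) (hA : IsSelfAdjoint A) (η : ℝ)
    (hB : ‖B‖ ≤ η / 2) :
    ∀ ψ : H, (1 / 2) * ‖A ψ‖ ^ 2 + η ^ 2 / 4 * ‖ψ‖ ^ 2 ≤
      ‖(A + B) ψ + (((η : ℂ) * Complex.I) • ψ)‖ ^ 2 := by
  intro ψ
  have hshift : ‖A ψ + ((η : ℂ) * I) • ψ‖ ^ 2 = ‖A ψ‖ ^ 2 + η ^ 2 * ‖ψ‖ ^ 2 :=
    hA.isSymmetric.norm_apply_add_real_mul_I_smul_sq η ψ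
  have hBψ : ‖B ψ‖ ≤ η / 2 * ‖ψ‖ := B.le_of_opNorm_le hB ψ
  have hBψ_sq : ‖B ψ‖ ^ 2 ≤ η ^ 2 / 4 * ‖ψ‖ ^ 2 := by
    nlinarith [norm_nonneg (B ψ), norm_nonneg ψ]
  have hsplit : (A + B) ψ + ((η : ℂ) * I) • ψ = (A ψ + ((η : ℂ) * I) • ψ) + B ψ := by
    rw [add_apply, add_right_comm]
  rw [hsplit]
  linarith [half_norm_sq_sub_norm_sq_le_norm_add_sq (A ψ + ((η : ℂ) * I) • ψ) (B ψ)]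

theorem stmt19 {H : Type*} [NormedAddCommGroup H] [InnerProductSpace ℂ H] [CompleteSpace H]
    (A B : H →L[ℂ] H) (hA : IsSelfAdjoint A) (η : ℝ) (hη : 0 < η)
    (hB : ‖B‖ ≤ η / 2) :
    ∀ ψ : H, (1 / 2) * ‖A ψ‖ ^ 2 + η ^ 2 / 4 * ‖ψ‖ ^ 2 ≤
      ‖(A + B) ψ + (((η : ℂ) * Complex.I) • ψ)‖ ^ 2 :=
  stmt19_general A B hA η hB
end
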